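/- arXiv:1811.05444 — 7 statements merged into one kernel-verified Lean document; each statement's English description precedes it below -/
import Mathlib

section
/- Let T be a complete first-order theory and φ(x̄,ȳ) a formula of T. Define θ(x̄,ȳ₀ȳ₁) := φ(x̄,ȳ₀) ∧ ¬φ(x̄,ȳ₁). Then the following are equivalent: θ(x̄,ȳ₀ȳ₁) admits Δ(IP); θ(x̄,ȳ₀ȳ₁) has the independence property; φ(x̄,ȳ) has the independence property. Consequently, T has the independence property (some formula of T has IP) if and only if T admits Δ(IP). -/
open FirstOrder

universe u v x w

/-- Δ' on J is an instance of Δ on I. -/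
def IsInstanceOf {J : Type*} {I : Type*} (Δ' : Set (Finset J)) (Δ : Set (Finset I)) : Prop :=
  ∀ s : Finset J, ∃ f : J → I, ∀ t ⊆ s,
    (t ∈ Δ' ↔ (letI := Classical.decEq I; t.image f) ∈ Δ)

/-- The pattern Δ(IP) on ω × 2: finite sets containing no pair (n,0), (n,1). -/
def deltaIP : Set (Finset (ℕ × Fin 2)) :=
  {s | ∀ n : ℕ, ¬((n, 0) ∈ s ∧ (n, 1) ∈ s)}

/-- φ(x̄,ȳ) admits Δ (relative to T). -/
def AdmitsVia {L : FirstOrder.Language.{u, v}} (T : L.Theory) {m n : ℕ}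
    (φ : L.Formula (Fin m ⊕ Fin n)) {I : Type x} (Δ : Set (Finset I)) : Prop :=
  ∃ (M : FirstOrder.Language.Theory.ModelType.{u, v, w} T) (a : I → Fin n → M),
    ∀ s : Finset I, (∃ xx : Fin m → M, ∀ i ∈ s, φ.Realize (Sum.elim xx (a i))) ↔ s ∈ Δ

/-- T admits Δ: some formula of T admits Δ. -/
def Admits {L : FirstOrder.Language.{u, v}} (T : L.Theory) {I : Type x} (Δ : Set (Finset I)) :
    Prop :=
  ∃ (m n : ℕ) (φ : L.Formula (Fin m ⊕ Fin n)), AdmitsVia.{u, v, x, w} T φ Δ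

/-- φ(x̄,ȳ) has the independence property (relative to T). -/
def HasIP {L : FirstOrder.Language.{u, v}} (T : L.Theory) {m n : ℕ}
    (φ : L.Formula (Fin m ⊕ Fin n)) : Prop :=
  ∃ (M : FirstOrder.Language.Theory.ModelType.{u, v, w} T) (b : ℕ → Fin n → M),
    ∀ uu vv : Finset ℕ, Disjoint uu vv →
      ∃ xx : Fin m → M, (∀ k ∈ uu, φ.Realize (Sum.elim xx (b k))) ∧
        (∀ k ∈ vv, ¬ φ.Realize (Sum.elim xx (b k)))

/-- θ(x̄, ȳ₀ȳ₁) := φ(x̄,ȳ₀) ∧ ¬φ(x̄,ȳ₁), as a formula in free variables Fin m ⊕ Fin (n + n). -/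
def ipPair {L : FirstOrder.Language.{u, v}} {m n : ℕ} (φ : L.Formula (Fin m ⊕ Fin n)) :
    L.Formula (Fin m ⊕ Fin (n + n)) :=
  (φ.relabel (Sum.map id (Fin.castAdd n))) ⊓ (φ.relabel (Sum.map id (Fin.natAdd n))).not

/-!
Having IP and admitting Δ(IP) are interchangeable for formulas of the form θ: the pattern
elements `(k, 0)` and `(k, 1)` are sent to the parameter pairs `(b₂ₖ, b₂ₖ₊₁)` and `(b₂ₖ₊₁, b₂ₖ)`
of an independent sequence for φ, and conversely the two halves of a Δ(IP)-configuration
separate `u` from `v`.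

The substance is that IP of θ(x, cd) gives IP of φ. If θ shatters `N` parameters `cₖdₖ`, every
subset of `N` is `P \ Q` for a φ-trace `P` on the `cₖ` and a φ-trace `Q` on the `dₖ`, so the two
trace families have `2 ^ N ≤ |𝒫| |𝒬|`. By the Sauer–Shelah lemma a family shattering no `D`-set
has at most `(N + 1) ^ D` members, so once `(N + 1) ^ (2D) < 2 ^ N` one of the families shatters
a `D`-set. Hence φ shatters arbitrarily large finite sets in a single model of T, and an
ultraproduct of that model over ℕ carries an infinite independent sequence.
-/

open Finset

theorem Nat.exists_succ_pow_lt_two_pow (K : ℕ) : ∃ N : ℕ, (N + 1) ^ K < 2 ^ N := by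
  have h := (tendsto_pow_const_div_const_pow_of_one_lt K one_lt_two).comp
    (Filter.tendsto_add_atTop_nat 1)
  obtain ⟨N, hN⟩ := (h.eventually (gt_mem_nhds (by norm_num : (0 : ℝ) < 1 / 2))).exists
  refine ⟨N, ?_⟩
  simp only [Function.comp_apply, Nat.cast_add, Nat.cast_one, pow_succ] at hN
  rw [div_lt_iff₀ (by positivity)] at hN
  exact_mod_cast (by linarith : ((N : ℝ) + 1) ^ K < 2 ^ N)

namespace Finset

variable {α : Type*} [Fintype α] [DecidableEq α]

theorem card_le_succ_pow_of_forall_not_shatters {𝒜 : Finset (Finset α)} {d : ℕ}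
    (h : ∀ s : Finset α, #s = d → ¬𝒜.Shatters s) : #𝒜 ≤ (Fintype.card α + 1) ^ d := by
  have hvc : 𝒜.vcDim ≤ d := Finset.sup_le fun s hs => by
    by_contra! hlt
    obtain ⟨t, hts, htd⟩ := exists_subset_card_eq hlt.le
    exact h t htd ((mem_shatterer.1 hs).mono_right hts)
  calc #𝒜 ≤ #𝒜.shatterer := card_le_card_shatterer 𝒜
    _ ≤ ∑ k ∈ Iic 𝒜.vcDim, (Fintype.card α).choose k := card_shatterer_le_sum_vcDim
    _ ≤ ∑ k ∈ range (d + 1), d.choose k * Fintype.card α ^ k := by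
      refine (sum_le_sum_of_subset_of_nonneg (fun k hk => ?_) fun _ _ _ => Nat.zero_le _).trans
        (sum_le_sum fun k hk => ?_)
      · rw [mem_Iic] at hk
        rw [mem_range]
        omega
      · have : 1 ≤ d.choose k := Nat.choose_pos (by simpa [Nat.lt_succ_iff] using hk)
        calc (Fintype.card α).choose k ≤ Fintype.card α ^ k := Nat.choose_le_pow _ _
          _ ≤ d.choose k * Fintype.card α ^ k := Nat.le_mul_of_pos_left _ this
    _ = (Fintype.card α + 1) ^ d := by rw [add_pow]; simp [mul_comm]

theorem two_pow_card_le_card_mul_card_of_forall_sdiff_eq {𝒜 ℬ : Finset (Finset α)}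
    (h : ∀ s : Finset α, ∃ t ∈ 𝒜, ∃ u ∈ ℬ, t \ u = s) : 2 ^ Fintype.card α ≤ #𝒜 * #ℬ :=
  calc 2 ^ Fintype.card α = #(univ : Finset (Finset α)) := by simp
    _ ≤ #((𝒜 ×ˢ ℬ).image fun p => p.1 \ p.2) := card_le_card fun s _ => by
      obtain ⟨t, ht, u, hu, rfl⟩ := h s
      exact mem_image.2 ⟨(t, u), mem_product.2 ⟨ht, hu⟩, rfl⟩
    _ ≤ #𝒜 * #ℬ := card_image_le.trans (card_product 𝒜 ℬ).le

theorem exists_shatters_of_forall_sdiff_eq {𝒜 ℬ : Finset (Finset α)} {d : ℕ}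
    (hd : (Fintype.card α + 1) ^ (d + d) < 2 ^ Fintype.card α)
    (h : ∀ s : Finset α, ∃ t ∈ 𝒜, ∃ u ∈ ℬ, t \ u = s) :
    ∃ s : Finset α, #s = d ∧ (𝒜.Shatters s ∨ ℬ.Shatters s) := by
  by_contra! hno
  have h𝒜 := card_le_succ_pow_of_forall_not_shatters fun s hs => (hno s hs).1
  have hℬ := card_le_succ_pow_of_forall_not_shatters fun s hs => (hno s hs).2
  have := (two_pow_card_le_card_mul_card_of_forall_sdiff_eq h).trans (Nat.mul_le_mul h𝒜 hℬ)
  rw [← pow_add] at this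
  omega

end Finset

namespace FirstOrder.Language

variable {L : Language.{u, v}} {M : Type*} [L.Structure M] {m n : ℕ} {ι κ : Type*}

theorem realize_ipPair (φ : L.Formula (Fin m ⊕ Fin n)) (x : Fin m → M) (b : Fin (n + n) → M) :
    (ipPair φ).Realize (Sum.elim x b) ↔
      φ.Realize (Sum.elim x (b ∘ Fin.castAdd n)) ∧ ¬φ.Realize (Sum.elim x (b ∘ Fin.natAdd n)) := by
  rw [ipPair, Formula.realize_inf, Formula.realize_not, Formula.realize_relabel,
    Formula.realize_relabel, Sum.elim_comp_map, Sum.elim_comp_map, Function.comp_id]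

theorem realize_ipPair_append (φ : L.Formula (Fin m ⊕ Fin n)) (x : Fin m → M)
    (c d : Fin n → M) :
    (ipPair φ).Realize (Sum.elim x (Fin.append c d)) ↔
      φ.Realize (Sum.elim x c) ∧ ¬φ.Realize (Sum.elim x d) := by
  rw [realize_ipPair, show Fin.append c d ∘ Fin.castAdd n = c from funext (Fin.append_left c d),
    show Fin.append c d ∘ Fin.natAdd n = d from funext (Fin.append_right c d)]

namespace Formula

def Shatters (φ : L.Formula (Fin m ⊕ Fin n)) (b : ι → Fin n → M) : Prop :=
  ∀ s : Set ι, ∃ x : Fin m → M, ∀ i, φ.Realize (Sum.elim x (b i)) ↔ i ∈ s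

theorem Shatters.comp {φ : L.Formula (Fin m ⊕ Fin n)} {b : ι → Fin n → M} (h : φ.Shatters b)
    {g : κ → ι} (hg : g.Injective) : φ.Shatters (b ∘ g) := fun s => by
  obtain ⟨x, hx⟩ := h (g '' s)
  exact ⟨x, fun i => (hx (g i)).trans hg.mem_set_image⟩

open scoped Classical in
noncomputable def trace [Fintype ι] (φ : L.Formula (Fin m ⊕ Fin n)) (b : ι → Fin n → M)
    (x : Fin m → M) : Finset ι :=
  {i | φ.Realize (Sum.elim x (b i))}

open scoped Classical in
noncomputable def traces [Fintype ι] (φ : L.Formula (Fin m ⊕ Fin n)) (b : ι → Fin n → M) :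
    Finset (Finset ι) :=
  {s | ∃ x, φ.trace b x = s}

variable {φ : L.Formula (Fin m ⊕ Fin n)} [Fintype ι]

theorem mem_trace {b : ι → Fin n → M} {x : Fin m → M} {i : ι} :
    i ∈ φ.trace b x ↔ φ.Realize (Sum.elim x (b i)) := by
  simp [trace]

theorem trace_mem_traces (b : ι → Fin n → M) (x : Fin m → M) : φ.trace b x ∈ φ.traces b := by
  simp [traces]

variable [DecidableEq ι]

theorem shatters_subtype_of_traces_shatters {b : ι → Fin n → M} {S : Finset ι}
    (h : (φ.traces b).Shatters S) :
    φ.Shatters fun i : S => b i := fun s => by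
  classical
  obtain ⟨t, ht, hSt⟩ := h (t := ({i | i ∈ s} : Finset S).map (Function.Embedding.subtype _))
    (by simp +contextual [Finset.subset_iff])
  obtain ⟨x, rfl⟩ : ∃ x, φ.trace b x = t := by simpa [traces] using ht
  refine ⟨x, fun i => ?_⟩
  have := Finset.ext_iff.1 hSt i
  simpa [mem_trace, i.2] using this

theorem exists_fin_shatters_of_traces_shatters {b : ι → Fin n → M} {S : Finset ι}
    (h : (φ.traces b).Shatters S) :
    ∃ e : Fin S.card → Fin n → M, φ.Shatters e :=
  ⟨_, (shatters_subtype_of_traces_shatters h).comp S.equivFin.symm.injective⟩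

theorem shatters_fin_of_forall_disjoint {b : ℕ → Fin n → M}
    (hb : ∀ uu vv : Finset ℕ, Disjoint uu vv → ∃ x : Fin m → M,
      (∀ k ∈ uu, φ.Realize (Sum.elim x (b k))) ∧ ∀ k ∈ vv, ¬φ.Realize (Sum.elim x (b k)))
    (N : ℕ) : φ.Shatters fun i : Fin N => b i := fun s => by
  classical
  obtain ⟨x, hin, hout⟩ := hb (({i | i ∈ s} : Finset (Fin N)).map Fin.valEmbedding)
    (({i | i ∉ s} : Finset (Fin N)).map Fin.valEmbedding)
    ((Finset.disjoint_map _).2 (Finset.disjoint_filter_filter_not _ _ _))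
  refine ⟨x, fun i => ⟨fun hx => ?_, fun hi => hin i (mem_map_of_mem _ (by simpa using hi))⟩⟩
  by_contra hi
  exact hout i (mem_map_of_mem _ (by simpa using hi)) hx

theorem exists_shatters_of_ipPair_shatters {N D : ℕ}
    (hN : (N + 1) ^ (D + D) < 2 ^ N) {b : Fin N → Fin (n + n) → M}
    (h : (ipPair φ).Shatters b) : ∃ e : Fin D → Fin n → M, φ.Shatters e := by
  classical
  set c := fun i => b i ∘ Fin.castAdd n
  set d := fun i => b i ∘ Fin.natAdd n
  -- the `ipPair φ`-trace of `x` is its `φ`-trace on `c` minus its `φ`-trace on `d`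
  have hsdiff : ∀ s, ∃ t ∈ φ.traces c, ∃ u ∈ φ.traces d, t \ u = s := fun s => by
    obtain ⟨x, hx⟩ := h s
    refine ⟨_, trace_mem_traces c x, _, trace_mem_traces d x, Finset.ext fun i => ?_⟩
    simpa [mem_trace, realize_ipPair] using hx i
  obtain ⟨S, rfl, hS | hS⟩ := Finset.exists_shatters_of_forall_sdiff_eq (by simpa using hN) hsdiff
  exacts [exists_fin_shatters_of_traces_shatters hS, exists_fin_shatters_of_traces_shatters hS]

end Formula

end FirstOrder.Language

section

open FirstOrder.Language

variable {L : FirstOrder.Language.{u, v}} {T : L.Theory} {m n : ℕ}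

theorem hasIP_of_forall_exists_shatters (M : T.ModelType.{u, v, w})
    {φ : L.Formula (Fin m ⊕ Fin n)} (h : ∀ D, ∃ e : Fin D → Fin n → M, φ.Shatters e) :
    HasIP.{u, v, w} T φ := by
  classical
  choose e he using h
  let 𝒰 := Filter.hyperfilter ℕ
  let P := (𝒰 : Filter ℕ).Product fun _ => (M : Type w)
  have : P ⊨ T := (Theory.model_iff _).2 fun σ hσ =>
    (Ultraproduct.sentence_realize (u := 𝒰) σ).2
      (.of_forall fun _ => M.is_model.realize_of_mem σ hσ)
  have los : ∀ (x : ℕ → Fin m → M) (c : ℕ → Fin n → M),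
      φ.Realize (Sum.elim (fun i => ((fun j => x j i : ∀ _, M) : P))
        (fun i => ((fun j => c j i : ∀ _, M) : P))) ↔
      ∀ᶠ j in (𝒰 : Filter ℕ), φ.Realize (Sum.elim (x j) (c j)) := fun x c => by
    rw [← Ultraproduct.realize_formula_cast]
    exact iff_of_eq (congrArg _ (funext (Sum.rec (fun _ => rfl) (fun _ => rfl))))
  -- the `k`-th parameter is the class of the sequence whose `j`-th term is `e j k` once `k < j`
  let b : ℕ → ℕ → Fin n → M := fun k j =>
    if hk : k < j then e j ⟨k, hk⟩ else fun _ => Classical.arbitrary M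
  refine ⟨Theory.ModelType.of T P, fun k i => ((fun j => b k j i : ∀ _, M) : P),
    fun uu vv huv => ?_⟩
  choose x hx using fun j => he j {i | ↑i ∈ uu}
  have hb : ∀ k, ∀ᶠ j in (𝒰 : Filter ℕ), φ.Realize (Sum.elim (x j) (b k j)) ↔ k ∈ uu :=
    fun k => ((Filter.eventually_gt_atTop k).filter_mono Nat.hyperfilter_le_atTop).mono
      fun j hj => by simpa [b, dif_pos hj] using hx j ⟨k, hj⟩
  refine ⟨fun i => ((fun j => x j i : ∀ _, M) : P), fun k hk => ?_, fun k hk => ?_⟩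
  · exact (los x (b k)).2 ((hb k).mono fun j hj => hj.2 hk)
  · refine mt (los x (b k)).1 ?_
    rw [← Ultrafilter.eventually_not]
    exact (hb k).mono fun j hj hφ => Finset.disjoint_left.1 huv (hj.1 hφ) hk

theorem HasIP.of_ipPair {φ : L.Formula (Fin m ⊕ Fin n)} (h : HasIP.{u, v, w} T (ipPair φ)) :
    HasIP.{u, v, w} T φ := by
  obtain ⟨M, b, hb⟩ := h
  refine hasIP_of_forall_exists_shatters M fun D => ?_
  obtain ⟨N, hN⟩ := Nat.exists_succ_pow_lt_two_pow (D + D)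
  exact Formula.exists_shatters_of_ipPair_shatters hN
    (Formula.shatters_fin_of_forall_disjoint hb N)

theorem AdmitsVia.hasIP {ψ : L.Formula (Fin m ⊕ Fin n)}
    (h : AdmitsVia.{u, v, 0, w} T ψ deltaIP) : HasIP.{u, v, w} T ψ := by
  classical
  obtain ⟨M, a, ha⟩ := h
  refine ⟨M, fun k => a (k, 0), fun uu vv huv => ?_⟩
  obtain ⟨x, hx⟩ := (ha (uu ×ˢ {0} ∪ vv ×ˢ {1})).2 fun k ⟨h0, h1⟩ => by
    simp only [Finset.mem_union, Finset.mem_product, Finset.mem_singleton] at h0 h1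
    exact Finset.disjoint_left.1 huv (by simpa using h0) (by simpa using h1)
  refine ⟨x, fun k hk => hx _ (by simp [hk]), fun k hk h0 => ?_⟩
  have h1 := hx (k, 1) (by simp [hk])
  exact (ha {(k, 0), (k, 1)}).1 ⟨x, by simp [h0, h1]⟩ k (by simp)

theorem HasIP.admitsVia_ipPair {φ : L.Formula (Fin m ⊕ Fin n)} (h : HasIP.{u, v, w} T φ) :
    AdmitsVia.{u, v, 0, w} T (ipPair φ) deltaIP := by
  classical
  obtain ⟨M, b, hb⟩ := h
  let idx := (Nat.divModEquiv 2).symm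
  let flip : ℕ × Fin 2 → ℕ × Fin 2 := Prod.map id Fin.rev
  refine ⟨M, fun p => Fin.append (b (idx p)) (b (idx (flip p))), fun s => ⟨?_, fun hs => ?_⟩⟩
  · rintro ⟨x, hx⟩ k ⟨h0, h1⟩
    exact ((realize_ipPair_append _ _ _ _).1 (hx _ h1)).2
      ((realize_ipPair_append _ _ _ _).1 (hx _ h0)).1
  have hflip : ∀ p ∈ s, flip p ∉ s := by
    rintro ⟨k, ε⟩ hp hp'
    fin_cases ε
    exacts [hs k ⟨hp, hp'⟩, hs k ⟨hp', hp⟩]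
  obtain ⟨x, hin, hout⟩ := hb (s.image idx) (s.image (idx ∘ flip)) <| by
    simp only [Finset.disjoint_left, Finset.mem_image, Function.comp_apply]
    rintro _ ⟨p, hp, rfl⟩ ⟨q, hq, hpq⟩
    obtain rfl := idx.injective hpq
    exact hflip q hq hp
  exact ⟨x, fun p hp => (realize_ipPair_append _ _ _ _).2
    ⟨hin _ (Finset.mem_image_of_mem _ hp), hout _ (Finset.mem_image_of_mem _ hp)⟩⟩

end

theorem statement2_general {L : FirstOrder.Language.{u, v}} (T : L.Theory)
    {m n : ℕ} (φ : L.Formula (Fin m ⊕ Fin n)) :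
    (AdmitsVia.{u, v, 0, w} T (ipPair φ) deltaIP ↔ HasIP.{u, v, w} T (ipPair φ)) ∧
    (HasIP.{u, v, w} T (ipPair φ) ↔ HasIP.{u, v, w} T φ) ∧
    ((∃ (m' n' : ℕ) (ψ : L.Formula (Fin m' ⊕ Fin n')), HasIP.{u, v, w} T ψ) ↔
      Admits.{u, v, 0, w} T deltaIP) :=
  ⟨⟨AdmitsVia.hasIP, fun h => h.of_ipPair.admitsVia_ipPair⟩,
    ⟨HasIP.of_ipPair, fun h => h.admitsVia_ipPair.hasIP⟩,
    fun ⟨m', n', ψ, hψ⟩ => ⟨m', n' + n', ipPair ψ, hψ.admitsVia_ipPair⟩,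
    fun ⟨m', n', ψ, hψ⟩ => ⟨m', n', ψ, hψ.hasIP⟩⟩

theorem statement2 {L : FirstOrder.Language.{u, v}} (T : L.Theory) (hT : T.IsComplete)
    {m n : ℕ} (φ : L.Formula (Fin m ⊕ Fin n)) :
    (AdmitsVia.{u, v, 0, w} T (ipPair φ) deltaIP ↔ HasIP.{u, v, w} T (ipPair φ)) ∧
    (HasIP.{u, v, w} T (ipPair φ) ↔ HasIP.{u, v, w} T φ) ∧
    ((∃ (m' n' : ℕ) (ψ : L.Formula (Fin m' ⊕ Fin n')), HasIP.{u, v, w} T ψ) ↔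
      Admits.{u, v, 0, w} T deltaIP) :=
  statement2_general T φ
end

section
/- Let T be a complete first-order theory and φ(x̄,ȳ) a formula of T. Then φ(x̄,ȳ) has the tree property of the second kind (TP₂) if and only if φ(x̄,ȳ) admits Δ(TP₂). Consequently, T has TP₂ (some formula of T has TP₂) if and only if T admits Δ(TP₂). -/
open FirstOrder

universe u v x w

/-- The pattern Δ(TP₂) on ω × ω: finite graphs of partial functions from ω to ω. -/
def deltaTP2 : Set (Finset (ℕ × ℕ)) :=
  {s | ∀ n m m' : ℕ, (n, m) ∈ s → (n, m') ∈ s → m = m'}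

/-- φ(x̄,ȳ) has the tree property of the second kind (relative to T). -/
def HasTP2 {L : FirstOrder.Language.{u, v}} (T : L.Theory) {m n : ℕ}
    (φ : L.Formula (Fin m ⊕ Fin n)) : Prop :=
  ∃ (M : FirstOrder.Language.Theory.ModelType.{u, v, w} T) (b : ℕ → ℕ → Fin n → M),
    (∀ (k : ℕ) (j j' : ℕ), j < j' →
      ¬ ∃ xx : Fin m → M, φ.Realize (Sum.elim xx (b k j)) ∧ φ.Realize (Sum.elim xx (b k j'))) ∧
    (∀ (η : ℕ → ℕ) (uu : Finset ℕ), ∃ xx : Fin m → M,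
      ∀ k ∈ uu, φ.Realize (Sum.elim xx (b k (η k))))

theorem mem_deltaTP2_iff_exists_fun {s : Finset (ℕ × ℕ)} :
    s ∈ deltaTP2 ↔ ∃ η : ℕ → ℕ, ∀ p ∈ s, η p.1 = p.2 := by
  classical
  constructor
  · intro hs
    refine ⟨fun k => if h : ∃ j, (k, j) ∈ s then h.choose else 0, fun ⟨k, j⟩ hp => ?_⟩
    have h : ∃ j, (k, j) ∈ s := ⟨j, hp⟩
    simpa only [dif_pos h] using hs k _ j h.choose_spec hp
  · rintro ⟨η, hη⟩ k j j' h h'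
    exact (hη _ h).symm.trans (hη _ h')

theorem eq_of_pair_mem_deltaTP2 {k j j' : ℕ} (h : {(k, j), (k, j')} ∈ deltaTP2) : j = j' :=
  h k j j' (by simp) (by simp)

theorem image_graph_mem_deltaTP2 (η : ℕ → ℕ) (U : Finset ℕ) :
    U.image (fun k => (k, η k)) ∈ deltaTP2 :=
  mem_deltaTP2_iff_exists_fun.mpr ⟨η, by simp⟩

section

variable {L : FirstOrder.Language.{u, v}} {T : L.Theory} {m n : ℕ} {φ : L.Formula (Fin m ⊕ Fin n)}

theorem admitsVia_deltaTP2_of_hasTP2 (h : HasTP2.{u, v, w} T φ) :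
    AdmitsVia.{u, v, 0, w} T φ deltaTP2 := by
  obtain ⟨M, b, hrow, hpath⟩ := h
  refine ⟨M, fun p => b p.1 p.2, fun s => ⟨?_, fun hs => ?_⟩⟩
  · rintro ⟨xx, hxx⟩ k j j' hj hj'
    rcases lt_trichotomy j j' with hlt | heq | hgt
    · exact absurd ⟨xx, hxx _ hj, hxx _ hj'⟩ (hrow k j j' hlt)
    · exact heq
    · exact absurd ⟨xx, hxx _ hj', hxx _ hj⟩ (hrow k j' j hgt)
  · obtain ⟨η, hη⟩ := mem_deltaTP2_iff_exists_fun.mp hs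
    obtain ⟨xx, hxx⟩ := hpath η (s.image Prod.fst)
    refine ⟨xx, fun p hp => ?_⟩
    simpa only [hη p hp] using hxx p.1 (Finset.mem_image_of_mem _ hp)

theorem hasTP2_of_admitsVia_deltaTP2 (h : AdmitsVia.{u, v, 0, w} T φ deltaTP2) :
    HasTP2.{u, v, w} T φ := by
  obtain ⟨M, a, ha⟩ := h
  refine ⟨M, fun k j => a (k, j), fun k j j' hlt hcons => ?_, fun η U => ?_⟩
  · obtain ⟨xx, hj, hj'⟩ := hcons
    refine hlt.ne (eq_of_pair_mem_deltaTP2 ((ha {(k, j), (k, j')}).mp ⟨xx, ?_⟩))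
    simpa only [Finset.mem_insert, Finset.mem_singleton, forall_eq_or_imp, forall_eq] using
      ⟨hj, hj'⟩
  · obtain ⟨xx, hxx⟩ := (ha _).mpr (image_graph_mem_deltaTP2 η U)
    exact ⟨xx, fun k hk => hxx _ (Finset.mem_image_of_mem _ hk)⟩

theorem hasTP2_iff_admitsVia_deltaTP2 :
    HasTP2.{u, v, w} T φ ↔ AdmitsVia.{u, v, 0, w} T φ deltaTP2 :=
  ⟨admitsVia_deltaTP2_of_hasTP2, hasTP2_of_admitsVia_deltaTP2⟩

end

theorem statement3_general {L : FirstOrder.Language.{u, v}} (T : L.Theory)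
    {m n : ℕ} (φ : L.Formula (Fin m ⊕ Fin n)) :
    (HasTP2.{u, v, w} T φ ↔ AdmitsVia.{u, v, 0, w} T φ deltaTP2) ∧
    ((∃ (m' n' : ℕ) (ψ : L.Formula (Fin m' ⊕ Fin n')), HasTP2.{u, v, w} T ψ) ↔
      Admits.{u, v, 0, w} T deltaTP2) :=
  ⟨hasTP2_iff_admitsVia_deltaTP2, exists₃_congr fun _ _ _ => hasTP2_iff_admitsVia_deltaTP2⟩

theorem statement3 {L : FirstOrder.Language.{u, v}} (T : L.Theory) (hT : T.IsComplete)
    {m n : ℕ} (φ : L.Formula (Fin m ⊕ Fin n)) :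
    (HasTP2.{u, v, w} T φ ↔ AdmitsVia.{u, v, 0, w} T φ deltaTP2) ∧
    ((∃ (m' n' : ℕ) (ψ : L.Formula (Fin m' ⊕ Fin n')), HasTP2.{u, v, w} T ψ) ↔
      Admits.{u, v, 0, w} T deltaTP2) :=
  statement3_general T φ
end

section
/- Let T be a complete first-order theory and φ(x̄,ȳ) a formula of T. Then φ(x̄,ȳ) has the finite dividing property if and only if there exist an infinite set I ⊆ ω∖{0} and a pattern Δ on I × ω with Δ_I(FDP) ⊆ Δ ⊆ Δ*_I(FDP) such that φ(x̄,ȳ) admits Δ. Hence T has the finite dividing property (some formula of T does) if and only if T admits some such pattern Δ. -/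
/-!
Both sides are equivalent to: for infinitely many `N`, some model of `T` carries a sequence
`(c_j)` such that a finite set of instances `φ(x̄, c_j)` is consistent iff it has at most `N`
elements ("exactly `N`-consistent").

From the finite dividing property such an `N ≥ k` is read off an indiscernible sequence, along
which consistency depends only on the size of the set. Conversely, an exactly `N`-consistent
sequence becomes indiscernible (and stays exactly `N`-consistent) in the ultrapower indexed by
`ℕ → ℕ` along an ultrafilter under which every increasing `l`-subsequence is distributed as the
`l`-th Fubini power of a nonprincipal ultrafilter on `ℕ`; this is the ultrafilter proof of
Ramsey's theorem.

On the pattern side, `Δ_I(FDP) ⊆ Δ ⊆ Δ*_I(FDP)` says precisely that row `m` of the family is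
exactly `m`-consistent. Conversely, by completeness of `T` all finite approximations of exactly
`m`-consistent sequences, for every level `m`, live in one model, and an ultraproduct over `ℕ`
assembles them into the rows of a single family.
-/
open FirstOrder

universe u v x w

/-- Δ is a pattern on I: a set of finite subsets of I closed under subsets. -/
def IsPattern {I : Type x} (Δ : Set (Finset I)) : Prop :=
  ∀ ⦃s t : Finset I⦄, t ⊆ s → s ∈ Δ → t ∈ Δ

/-- The pattern Δ_I(FDP) on I × ω: finite sets s such that for some m ∈ I,
s ⊆ {m} × ω and |s| ≤ m. -/
def deltaFDP (I : Set ℕ) : Set (Finset (I × ℕ)) :=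
  {s | ∃ m : I, (∀ p ∈ s, p.1 = m) ∧ s.card ≤ (m : ℕ)}

/-- The pattern Δ*_I(FDP) on I × ω: finite sets s with |s ∩ {m} × ω| ≤ m for all m ∈ I. -/
def deltaFDPstar (I : Set ℕ) : Set (Finset (I × ℕ)) :=
  {s | ∀ m : I, (s.filter (fun p => p.1 = m)).card ≤ (m : ℕ)}

/-- (b_j)_{j<ω} is an indiscernible sequence of n-tuples over ∅: any two strictly increasing
finite tuples of the same length from the sequence satisfy the same formulas. -/
def IsIndiscernible {L : FirstOrder.Language.{u, v}} {M : Type w} [L.Structure M] {n : ℕ}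
    (b : ℕ → Fin n → M) : Prop :=
  ∀ (l : ℕ) (ψ : L.Formula (Fin l × Fin n)) (g h : Fin l → ℕ),
    StrictMono g → StrictMono h →
      (ψ.Realize (fun p => b (g p.1) p.2) ↔ ψ.Realize (fun p => b (h p.1) p.2))

/-- φ(x̄,ȳ) has the finite dividing property (relative to T). -/
def HasFDP {L : FirstOrder.Language.{u, v}} (T : L.Theory) {m n : ℕ}
    (φ : L.Formula (Fin m ⊕ Fin n)) : Prop :=
  ∀ k : ℕ, ∃ (M : FirstOrder.Language.Theory.ModelType.{u, v, w} T) (b : ℕ → Fin n → M),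
    IsIndiscernible (L := L) b ∧
    (∀ uu : Finset ℕ, uu.card = k → ∃ xx : Fin m → M, ∀ j ∈ uu, φ.Realize (Sum.elim xx (b j))) ∧
    (∃ uu : Finset ℕ, ¬ ∃ xx : Fin m → M, ∀ j ∈ uu, φ.Realize (Sum.elim xx (b j)))

namespace FiniteDividing

open Filter FirstOrder FirstOrder.Language

section GenericSequence

variable {α : Type*} (U : Ultrafilter α)

noncomputable def fubiniPow : (l : ℕ) → Ultrafilter (Fin l → α)
  | 0 => pure Fin.elim0
  | l + 1 => (fubiniPow l).bind fun v => U.map (Fin.snoc v)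

variable {U}

theorem mem_fubiniPow_succ {l : ℕ} {A : Set (Fin (l + 1) → α)} :
    A ∈ fubiniPow U (l + 1) ↔ ∀ᶠ v in fubiniPow U l, ∀ᶠ x in U, Fin.snoc v x ∈ A :=
  mem_bind'

theorem tendsto_comp_fubiniPow {R l : ℕ} {γ : Fin l → Fin R} (hγ : StrictMono γ) :
    Tendsto (· ∘ γ) (fubiniPow U R : Filter (Fin R → α)) (fubiniPow U l) := by
  induction R generalizing l with
  | zero =>
    cases l with
    | zero => exact tendsto_pure.2 (.of_forall fun _ => Subsingleton.elim _ _)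
    | succ l => exact (γ 0).elim0
  | succ R ih =>
    intro A hA
    cases l with
    | zero =>
      have h0 : Fin.elim0 ∈ A := hA
      exact univ_mem' fun w => by rwa [Subsingleton.elim w Fin.elim0]
    | succ l =>
      rw [mem_map, Ultrafilter.mem_coe, mem_fubiniPow_succ]
      rw [Ultrafilter.mem_coe] at hA
      by_cases hlast : γ (Fin.last l) = Fin.last R
      · have hlt (i : Fin l) : γ i.castSucc ≠ Fin.last R :=
          hlast ▸ (hγ (Fin.castSucc_lt_last i)).ne
        set γ' : Fin l → Fin R := fun i => (γ i.castSucc).castPred (hlt i)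
        have hγ' : StrictMono γ' := fun i j hij =>
          Fin.castPred_lt_castPred_iff.2 (hγ (by simpa using hij))
        have hsplit : γ = Fin.snoc (Fin.castSucc ∘ γ') (Fin.last R) := by
          funext i
          induction i using Fin.lastCases with
          | last => simpa using hlast
          | cast i => simp [γ']
        filter_upwards [ih hγ' (mem_fubiniPow_succ.1 hA)] with w hw
        filter_upwards [hw] with x hx
        simpa [hsplit, Fin.comp_snoc, ← Function.comp_assoc] using hx
      · have hne (i : Fin (l + 1)) : γ i ≠ Fin.last R := fun h =>
          hlast (le_antisymm (Fin.le_last _) (h ▸ hγ.monotone (Fin.le_last i)))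
        set γ' : Fin (l + 1) → Fin R := fun i => (γ i).castPred (hne i)
        have hγ' : StrictMono γ' := fun i j hij => Fin.castPred_lt_castPred_iff.2 (hγ hij)
        have hsplit : γ = Fin.castSucc ∘ γ' := by funext i; simp [γ']
        filter_upwards [ih hγ' hA] with w hw
        exact .of_forall fun x => by simpa [hsplit, ← Function.comp_assoc] using hw

theorem strictMono_snoc {l : ℕ} [Preorder α] {v : Fin l → α} (hv : StrictMono v) {x : α}
    (hx : ∀ i, v i < x) : StrictMono (Fin.snoc v x : Fin (l + 1) → α) := by
  intro a b hab
  induction b using Fin.lastCases with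
  | last =>
    obtain ⟨a, rfl⟩ := Fin.exists_castSucc_eq.2 hab.ne
    simpa using hx a
  | cast b =>
    obtain ⟨a, rfl⟩ := Fin.exists_castSucc_eq.2 (hab.trans (Fin.castSucc_lt_last b)).ne
    simpa using hv (Fin.castSucc_lt_castSucc_iff.1 hab)

theorem eventually_strictMono_fubiniPow [Preorder α] [NoMaxOrder α]
    (hU : (U : Filter α) ≤ atTop) (l : ℕ) :
    ∀ᶠ v in (fubiniPow U l : Filter (Fin l → α)), StrictMono v := by
  induction l with
  | zero => exact .of_forall fun v i => i.elim0
  | succ l ih =>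
    rw [Filter.Eventually, Ultrafilter.mem_coe, mem_fubiniPow_succ]
    filter_upwards [ih] with v hv
    filter_upwards [(eventually_all.2 fun i => eventually_gt_atTop (v i)).filter_mono hU]
      with x hx
    exact strictMono_snoc hv hx

theorem neBot_iInf_comap_fubiniPow [Nonempty α] :
    (⨅ R, (fubiniPow U R : Filter (Fin R → α)).comap
      (· ∘ Fin.val : (ℕ → α) → Fin R → α)).NeBot := by
  refine iInf_neBot_of_directed (Antitone.directed_ge fun R R' hR => ?_)
    fun R => (Ultrafilter.neBot _).comap_of_surj Fin.val_injective.surjective_comp_right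
  rw [← show (· ∘ Fin.castLE hR) ∘ (· ∘ Fin.val) = (· ∘ Fin.val : (ℕ → α) → Fin R → α) from rfl,
    ← comap_comap]
  exact comap_mono (tendsto_comp_fubiniPow (Fin.strictMono_castLE hR)).le_comap

noncomputable def genericSeq [Nonempty α] (U : Ultrafilter α) : Ultrafilter (ℕ → α) :=
  haveI := neBot_iInf_comap_fubiniPow (U := U)
  .of (⨅ R, (fubiniPow U R : Filter (Fin R → α)).comap (· ∘ Fin.val))

theorem comp_mem_genericSeq_iff [Nonempty α] {l : ℕ} {g : Fin l → ℕ} (hg : StrictMono g)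
    {A : Set (Fin l → α)} : {f | f ∘ g ∈ A} ∈ genericSeq U ↔ A ∈ fubiniPow U l := by
  suffices h : ∀ A ∈ fubiniPow U l, {f : ℕ → α | f ∘ g ∈ A} ∈ genericSeq U by
    refine ⟨fun hA => ?_, h A⟩
    by_contra hA'
    exact (genericSeq U).compl_mem_iff_notMem.1
      (h _ ((fubiniPow U l).compl_mem_iff_notMem.2 hA')) hA
  intro A hA
  obtain ⟨R, hR⟩ := (Finset.univ.image g).exists_nat_subset_range
  have hgR (i : Fin l) : g i < R :=
    Finset.mem_range.1 (hR (Finset.mem_image_of_mem g (Finset.mem_univ i)))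
  let γ : Fin l → Fin R := fun i => ⟨g i, hgR i⟩
  have := neBot_iInf_comap_fubiniPow (U := U)
  exact Ultrafilter.of_le _
    (mem_iInf_of_mem R ⟨_, tendsto_comp_fubiniPow (γ := γ) hg hA, fun f hf => hf⟩)

theorem eventually_injOn_genericSeq [Preorder α] [NoMaxOrder α] [Nonempty α]
    (hU : (U : Filter α) ≤ atTop) (s : Finset ℕ) :
    ∀ᶠ f in (genericSeq U : Filter (ℕ → α)), Set.InjOn f s := by
  obtain ⟨R, hR⟩ := s.exists_nat_subset_range
  have := (comp_mem_genericSeq_iff (U := U) (g := (Fin.val : Fin R → ℕ)) fun _ _ h => h).2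
    (eventually_strictMono_fubiniPow hU R)
  filter_upwards [this] with f hf x hx y hy hxy
  exact congrArg Fin.val (hf.injective (a₁ := ⟨x, Finset.mem_range.1 (hR hx)⟩)
    (a₂ := ⟨y, Finset.mem_range.1 (hR hy)⟩) hxy)

end GenericSequence

section Consistency

variable {L : FirstOrder.Language} {m n : ℕ} {M : Type*} [L.Structure M] {β γ : Type*}

def Consistent (φ : L.Formula (Fin m ⊕ Fin n)) (d : β → Fin n → M) (s : Finset β) : Prop :=
  ∃ xx : Fin m → M, ∀ j ∈ s, φ.Realize (Sum.elim xx (d j))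

def IsExactlyConsistent (φ : L.Formula (Fin m ⊕ Fin n)) (d : β → Fin n → M) (N : ℕ) : Prop :=
  ∀ s : Finset β, Consistent φ d s ↔ s.card ≤ N

variable {φ : L.Formula (Fin m ⊕ Fin n)}

theorem Consistent.mono {d : β → Fin n → M} {s t : Finset β} (hts : t ⊆ s)
    (h : Consistent φ d s) : Consistent φ d t :=
  let ⟨xx, hxx⟩ := h
  ⟨xx, fun j hj => hxx j (hts hj)⟩

theorem consistent_congr {d d' : β → Fin n → M} {s : Finset β} (h : ∀ j ∈ s, d j = d' j) :
    Consistent φ d s ↔ Consistent φ d' s := by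
  refine exists_congr fun xx => forall₂_congr fun j hj => ?_
  rw [h j hj]

theorem consistent_image [DecidableEq γ] {d : γ → Fin n → M} {g : β → γ} {s : Finset β} :
    Consistent φ d (s.image g) ↔ Consistent φ (d ∘ g) s := by
  simp [Consistent]

theorem IsExactlyConsistent.consistent_comp_iff {d : γ → Fin n → M} {N : ℕ}
    (hd : IsExactlyConsistent φ d N) {g : β → γ} {s : Finset β} (hg : Set.InjOn g s) :
    Consistent φ (d ∘ g) s ↔ s.card ≤ N := by
  classical
  rw [← consistent_image, hd, Finset.card_image_of_injOn hg]

theorem IsExactlyConsistent.comp {d : γ → Fin n → M} {N : ℕ} (hd : IsExactlyConsistent φ d N)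
    {g : β → γ} (hg : g.Injective) : IsExactlyConsistent φ (d ∘ g) N :=
  fun _ => hd.consistent_comp_iff hg.injOn

noncomputable def consistencyFormula (φ : L.Formula (Fin m ⊕ Fin n)) (s : Finset β) :
    L.Formula (β × Fin n) :=
  Formula.iExs (Fin m) <| (Formula.iInf fun j : s =>
    φ.relabel (Sum.map id fun q => (j.1, q))).relabel (Sum.elim Sum.inr Sum.inl)

theorem realize_consistencyFormula {s : Finset β} {w : β × Fin n → M} :
    (consistencyFormula φ s).Realize w ↔ Consistent φ (fun j q => w (j, q)) s := by
  simp only [consistencyFormula, Formula.realize_iExs, Formula.realize_relabel,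
    Formula.realize_iInf, Consistent]
  refine exists_congr fun xx => ⟨fun h j hj => ?_, fun h j => ?_⟩
  · convert h ⟨j, hj⟩ using 2
    ext (_ | _) <;> rfl
  · convert h j.1 j.2 using 2
    ext (_ | _) <;> rfl

theorem _root_.IsIndiscernible.consistent_iff_of_card_eq {b : ℕ → Fin n → M}
    (hb : IsIndiscernible (L := L) b) {s t : Finset ℕ} (h : s.card = t.card) :
    Consistent φ b s ↔ Consistent φ b t := by
  have key (u : Finset ℕ) {k : ℕ} (hu : u.card = k) : Consistent φ b u ↔
      (consistencyFormula φ (Finset.univ : Finset (Fin k))).Realize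
        fun p => b (u.orderEmbOfFin hu p.1) p.2 := by
    rw [realize_consistencyFormula]
    conv_lhs => rw [← u.image_orderEmbOfFin_univ hu]
    exact consistent_image
  rw [key s h, key t rfl]
  exact hb _ _ _ _ (s.orderEmbOfFin h).strictMono (t.orderEmbOfFin rfl).strictMono

theorem _root_.IsIndiscernible.exists_isExactlyConsistent {b : ℕ → Fin n → M}
    (hb : IsIndiscernible (L := L) b) {k : ℕ}
    (hk : ∀ s : Finset ℕ, s.card = k → Consistent φ b s) {s₀ : Finset ℕ}
    (hs₀ : ¬ Consistent φ b s₀) : ∃ N, k ≤ N ∧ IsExactlyConsistent φ b N := by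
  classical
  have hex : ∃ l, ¬ Consistent φ b (Finset.range l) :=
    ⟨s₀.card, fun h => hs₀ ((hb.consistent_iff_of_card_eq (Finset.card_range _)).1 h)⟩
  have hrange (l : ℕ) : Consistent φ b (Finset.range l) ↔ l < Nat.find hex :=
    ⟨fun h => not_le.1 fun hle => Nat.find_spec hex (h.mono (Finset.range_subset_range.2 hle)),
      fun h => not_not.1 (Nat.find_min hex h)⟩
  have hk' : k < Nat.find hex := (hrange k).1 (hk _ (Finset.card_range k))
  refine ⟨Nat.find hex - 1, by omega, fun s => ?_⟩
  rw [hb.consistent_iff_of_card_eq (Finset.card_range s.card).symm, hrange]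
  omega

noncomputable def exactlyConsistentSentence (φ : L.Formula (Fin m ⊕ Fin n)) (N K : ℕ) :
    L.Sentence :=
  Formula.iExs (Fin K × Fin n) <| (Formula.iInf fun s : Finset (Fin K) =>
    if s.card ≤ N then consistencyFormula φ s else (consistencyFormula φ s).not).relabel Sum.inr

theorem realize_exactlyConsistentSentence {N K : ℕ} :
    M ⊨ exactlyConsistentSentence φ N K ↔ ∃ d : Fin K → Fin n → M, IsExactlyConsistent φ d N := by
  have realize_ite (s : Finset (Fin K)) (w : Fin K × Fin n → M) :
      (if s.card ≤ N then consistencyFormula φ s else (consistencyFormula φ s).not).Realize w ↔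
        (Consistent φ (fun j q => w (j, q)) s ↔ s.card ≤ N) := by
    split_ifs with h <;> simp [Formula.realize_not, realize_consistencyFormula, h]
  simp only [exactlyConsistentSentence, Sentence.Realize, Formula.realize_iExs,
    Formula.realize_relabel, Formula.realize_iInf, Sum.elim_comp_inr, realize_ite]
  exact ⟨fun ⟨w, hw⟩ => ⟨fun j q => w (j, q), hw⟩, fun ⟨d, hd⟩ => ⟨fun p => d p.1 p.2, hd⟩⟩

end Consistency

section Ultraproducts

variable {L : FirstOrder.Language} {m n : ℕ} {ι β : Type*} {U : Ultrafilter ι} {M : ι → Type*}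
  [∀ i, L.Structure (M i)] [∀ i, Nonempty (M i)]

instance {T : L.Theory} [∀ i, M i ⊨ T] : (U : Filter ι).Product M ⊨ T :=
  (Theory.model_iff _).2 fun σ hσ =>
    Ultraproduct.sentence_realize σ |>.2 (.of_forall fun _ => Theory.realize_sentence_of_mem T hσ)

theorem consistent_ultraproduct_iff {φ : L.Formula (Fin m ⊕ Fin n)} {d : ∀ i, β → Fin n → M i}
    {s : Finset β} :
    Consistent φ (fun j q => ((fun i => d i j q : ∀ i, M i) : (U : Filter ι).Product M)) s ↔
      ∀ᶠ i in U, Consistent φ (d i) s := by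
  have := Ultraproduct.realize_formula_cast (u := U) (consistencyFormula φ s)
    fun p i => d i p.1 p.2
  simpa only [realize_consistencyFormula] using this

theorem isExactlyConsistent_ultraproduct {φ : L.Formula (Fin m ⊕ Fin n)}
    {d : ∀ i, β → Fin n → M i} {N : ℕ}
    (h : ∀ s : Finset β, ∀ᶠ i in U, Consistent φ (d i) s ↔ s.card ≤ N) :
    IsExactlyConsistent φ
      (fun j q => ((fun i => d i j q : ∀ i, M i) : (U : Filter ι).Product M)) N :=
  fun s => consistent_ultraproduct_iff.trans ((eventually_congr (h s)).trans eventually_const)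

end Ultraproducts

section Levels

variable {L : FirstOrder.Language.{u, v}} {m n : ℕ} {T : L.Theory}
  {φ : L.Formula (Fin m ⊕ Fin n)}

def exactConsistencyLevels (T : L.Theory) (φ : L.Formula (Fin m ⊕ Fin n)) : Set ℕ :=
  {N | ∃ (M : T.ModelType.{u, v, w}) (c : ℕ → Fin n → M), IsExactlyConsistent φ c N}

theorem isIndiscernible_genericSeq {α : Type*} [Nonempty α] (U : Ultrafilter α) {M : Type*}
    [L.Structure M] [Nonempty M] (c : α → Fin n → M) :
    IsIndiscernible (L := L) fun j q =>
      ((fun f : ℕ → α => c (f j) q) : (genericSeq U : Filter (ℕ → α)).Product fun _ => M) := by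
  intro l ψ g h hg hh
  let A : Set (Fin l → α) := {v | ψ.Realize fun p => c (v p.1) p.2}
  exact (Ultraproduct.realize_formula_cast ψ fun p (f : ℕ → α) => c (f (g p.1)) p.2).trans <|
    (comp_mem_genericSeq_iff (A := A) hg).trans <| (comp_mem_genericSeq_iff hh).symm.trans
      (Ultraproduct.realize_formula_cast ψ fun p (f : ℕ → α) => c (f (h p.1)) p.2).symm

theorem exists_indiscernible_of_mem_exactConsistencyLevels {N : ℕ}
    (hN : N ∈ exactConsistencyLevels.{u, v, w} T φ) :
    ∃ (M : T.ModelType.{u, v, w}) (b : ℕ → Fin n → M),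
      IsIndiscernible (L := L) b ∧ IsExactlyConsistent φ b N := by
  obtain ⟨M, c, hc⟩ := hN
  refine ⟨.of T ((genericSeq (hyperfilter ℕ) : Filter (ℕ → ℕ)).Product fun _ => M), _,
    isIndiscernible_genericSeq _ c, isExactlyConsistent_ultraproduct fun s => ?_⟩
  exact (eventually_injOn_genericSeq Nat.hyperfilter_le_atTop s).mono fun f hf =>
    hc.consistent_comp_iff hf

theorem hasFDP_iff_infinite :
    HasFDP.{u, v, w} T φ ↔ (exactConsistencyLevels.{u, v, w} T φ).Infinite := by
  refine ⟨fun h => Set.infinite_of_forall_exists_gt fun k => ?_, fun h k => ?_⟩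
  · obtain ⟨M, b, hb, hk, s₀, hs₀⟩ := h (k + 1)
    obtain ⟨N, hkN, hN⟩ := hb.exists_isExactlyConsistent hk hs₀
    exact ⟨N, ⟨M, b, hN⟩, hkN⟩
  · obtain ⟨N, hN, hkN⟩ := h.exists_gt k
    obtain ⟨M, b, hb, hbN⟩ := exists_indiscernible_of_mem_exactConsistencyLevels hN
    refine ⟨M, b, hb, fun s hs => (hbN s).2 (hs ▸ hkN.le), Finset.range (N + 1), fun h => ?_⟩
    simpa using (hbN _).1 h

theorem consistent_iff_card_le_of_row {M : Type*} [L.Structure M] {α β : Type*}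
    {a : α × β → Fin n → M} {N : α → ℕ}
    (ha : ∀ p, IsExactlyConsistent φ (fun j => a (p, j)) (N p)) {p : α} {s : Finset (α × β)}
    (hs : ∀ q ∈ s, q.1 = p) : Consistent φ a s ↔ s.card ≤ N p := by
  have hrow : ∀ q ∈ s, a q = ((fun j => a (p, j)) ∘ Prod.snd) q := fun q hq => by
    rw [← hs q hq]; rfl
  rw [consistent_congr hrow]
  exact (ha p).consistent_comp_iff fun q hq q' hq' h =>
    Prod.ext ((hs q hq).trans (hs q' hq').symm) h

theorem exists_pattern_iff (I : Set ℕ) :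
    (∃ Δ : Set (Finset (I × ℕ)), IsPattern Δ ∧ deltaFDP I ⊆ Δ ∧ Δ ⊆ deltaFDPstar I ∧
        AdmitsVia.{u, v, 0, w} T φ Δ) ↔
      ∃ (M : T.ModelType.{u, v, w}) (a : I × ℕ → Fin n → M),
        ∀ p : I, IsExactlyConsistent φ (fun j => a (p, j)) p := by
  classical
  constructor
  · rintro ⟨Δ, -, hlow, hhigh, M, a, ha⟩
    refine ⟨M, a, fun p u => ?_⟩
    have hrow : ∀ q ∈ u.image (Prod.mk p), q.1 = p := by simp
    refine consistent_image.symm.trans <| (ha _).trans ?_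
    rw [← Finset.card_image_of_injective u (Prod.mk_right_injective p)]
    exact ⟨fun h => by simpa [Finset.filter_true_of_mem hrow] using hhigh h p,
      fun h => hlow ⟨p, hrow, h⟩⟩
  · rintro ⟨M, a, ha⟩
    refine ⟨{s | Consistent φ a s}, fun s t hts hs => hs.mono hts, fun s ⟨p, hs, hcard⟩ =>
      (consistent_iff_card_le_of_row ha hs).2 hcard, fun s hs p => ?_, M, a, fun s => Iff.rfl⟩
    exact (consistent_iff_card_le_of_row ha (p := p) (by simp)).1
      (hs.mono (Finset.filter_subset _ s))

theorem exists_fin_isExactlyConsistent (hT : T.IsComplete) (M₀ : T.ModelType.{u, v, w}) {N : ℕ}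
    (hN : N ∈ exactConsistencyLevels.{u, v, w} T φ) (K : ℕ) :
    ∃ d : Fin K → Fin n → M₀, IsExactlyConsistent φ d N := by
  obtain ⟨M, c, hc⟩ := hN
  have hM : M ⊨ exactlyConsistentSentence φ N K :=
    realize_exactlyConsistentSentence.2 ⟨c ∘ Fin.val, hc.comp Fin.val_injective⟩
  exact realize_exactlyConsistentSentence.1
    ((hT.realize_sentence_iff _ M₀).2 ((hT.realize_sentence_iff _ M).1 hM))

theorem injOn_finOfNat {K : ℕ} [NeZero K] {s : Finset ℕ} (hs : s ⊆ Finset.range K) :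
    Set.InjOn (Fin.ofNat K) s := fun x hx y hy h => by
  simpa [Nat.mod_eq_of_lt (Finset.mem_range.1 (hs hx)),
    Nat.mod_eq_of_lt (Finset.mem_range.1 (hs hy))] using congrArg Fin.val h

theorem exists_rows_of_subset_exactConsistencyLevels (hT : T.IsComplete)
    (M₀ : T.ModelType.{u, v, w}) {I : Set ℕ} (hI : I ⊆ exactConsistencyLevels.{u, v, w} T φ) :
    ∃ (M : T.ModelType.{u, v, w}) (a : I × ℕ → Fin n → M),
      ∀ p : I, IsExactlyConsistent φ (fun j => a (p, j)) p := by
  choose d hd using fun (p : I) (i : ℕ) => exists_fin_isExactlyConsistent hT M₀ (hI p.2) (i + 1)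
  -- At coordinate `i`, row `p` cycles through an exactly `p`-consistent sequence of length
  -- `i + 1`; every finite set of indices eventually lies within one period.
  refine ⟨.of T ((hyperfilter ℕ : Filter ℕ).Product fun _ => M₀),
    fun pj q => ((fun i => d pj.1 i (Fin.ofNat (i + 1) pj.2) q : ℕ → M₀) :
      (hyperfilter ℕ : Filter ℕ).Product fun _ => M₀),
    fun p => isExactlyConsistent_ultraproduct fun s => ?_⟩
  obtain ⟨K, hK⟩ := s.exists_nat_subset_range
  filter_upwards [(eventually_ge_atTop K).filter_mono Nat.hyperfilter_le_atTop] with i hi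
  exact (hd p i).consistent_comp_iff
    (injOn_finOfNat (hK.trans (Finset.range_subset_range.2 (by omega))))

theorem exists_pattern_iff_infinite (hT : T.IsComplete) :
    (∃ I : Set ℕ, I.Infinite ∧ 0 ∉ I ∧ ∃ Δ : Set (Finset (I × ℕ)), IsPattern Δ ∧
        deltaFDP I ⊆ Δ ∧ Δ ⊆ deltaFDPstar I ∧ AdmitsVia.{u, v, 0, w} T φ Δ) ↔
      (exactConsistencyLevels.{u, v, w} T φ).Infinite := by
  constructor
  · rintro ⟨I, hI, -, hΔ⟩
    obtain ⟨M, a, ha⟩ := (exists_pattern_iff I).1 hΔ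
    exact hI.mono fun p hp => ⟨M, fun j => a (⟨p, hp⟩, j), ha ⟨p, hp⟩⟩
  · intro h
    obtain ⟨M₀, -⟩ := h.nonempty.some_mem
    refine ⟨_, h.sdiff (Set.finite_singleton 0), fun h0 => h0.2 rfl, (exists_pattern_iff _).2 ?_⟩
    exact exists_rows_of_subset_exactConsistencyLevels hT M₀ Set.sdiff_subset

theorem hasFDP_iff_exists_pattern (hT : T.IsComplete) (φ : L.Formula (Fin m ⊕ Fin n)) :
    HasFDP.{u, v, w} T φ ↔ ∃ I : Set ℕ, I.Infinite ∧ 0 ∉ I ∧ ∃ Δ : Set (Finset (I × ℕ)),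
      IsPattern Δ ∧ deltaFDP I ⊆ Δ ∧ Δ ⊆ deltaFDPstar I ∧ AdmitsVia.{u, v, 0, w} T φ Δ :=
  hasFDP_iff_infinite.trans (exists_pattern_iff_infinite hT).symm

end Levels

end FiniteDividing

theorem statement4 {L : FirstOrder.Language.{u, v}} (T : L.Theory) (hT : T.IsComplete)
    {m n : ℕ} (φ : L.Formula (Fin m ⊕ Fin n)) :
    (HasFDP.{u, v, w} T φ ↔
      ∃ I : Set ℕ, I.Infinite ∧ 0 ∉ I ∧
        ∃ Δ : Set (Finset (I × ℕ)), IsPattern Δ ∧ deltaFDP I ⊆ Δ ∧ Δ ⊆ deltaFDPstar I ∧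
          AdmitsVia.{u, v, 0, w} T φ Δ) ∧
    ((∃ (m' n' : ℕ) (ψ : L.Formula (Fin m' ⊕ Fin n')), HasFDP.{u, v, w} T ψ) ↔
      ∃ I : Set ℕ, I.Infinite ∧ 0 ∉ I ∧
        ∃ Δ : Set (Finset (I × ℕ)), IsPattern Δ ∧ deltaFDP I ⊆ Δ ∧ Δ ⊆ deltaFDPstar I ∧
          ∃ (m' n' : ℕ) (ψ : L.Formula (Fin m' ⊕ Fin n')), AdmitsVia.{u, v, 0, w} T ψ Δ) := by
  refine ⟨FiniteDividing.hasFDP_iff_exists_pattern hT φ, ?_, ?_⟩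
  · rintro ⟨m', n', ψ, hψ⟩
    obtain ⟨I, hI, h0, Δ, hΔ, hlow, hhigh, hA⟩ :=
      (FiniteDividing.hasFDP_iff_exists_pattern hT ψ).1 hψ
    exact ⟨I, hI, h0, Δ, hΔ, hlow, hhigh, m', n', ψ, hA⟩
  · rintro ⟨I, hI, h0, Δ, hΔ, hlow, hhigh, m', n', ψ, hA⟩
    exact ⟨m', n', ψ,
      (FiniteDividing.hasFDP_iff_exists_pattern hT ψ).2 ⟨I, hI, h0, Δ, hΔ, hlow, hhigh, hA⟩⟩
end

section
/- Suppose 2 ≤ k < n and let I be a linearly ordered index set. For any S ⊆ [I]^k, there exist i* < ω, an index set I', and an n-clique-free S' ⊆ [I']^k such that Δ_{n,k}(S) is an instance of Δ_{n,k}(S')^{i*}. Concretely one may take i* = C(n−1, k−1), I' = I × {0,…,n−2}, and S' = { {(x, h(x)) : x ∈ v} : v ∈ S and h : v → {0,…,n−2} is strictly increasing }. -/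
universe x y

/-- Δ^m : the pattern on [I]^{≤m} consisting of finite s with ⋃ s ∈ Δ. -/
def patternPow {I : Type x} (Δ : Set (Finset I)) (m : ℕ) :
    Set (Finset {u : Finset I // u.card ≤ m}) :=
  letI := Classical.decEq I
  {s | s.sup (fun u => u.1) ∈ Δ}

/-- The pattern Δ_{n,k}(S) on [I]^{k-1}: finite sets s of (k-1)-element subsets of I such that
there is no (n-1)-element v ⊆ I with all (k-1)-element subsets of v in s and all k-element
subsets of v in S. -/
def deltaNK {I : Type x} (n k : ℕ) (S : Set (Finset I)) :
    Set (Finset {u : Finset I // u.card = k - 1}) :=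
  {s | ¬ ∃ v : Finset I, v.card = n - 1 ∧
      (∀ (u : Finset I) (hu : u.card = k - 1), u ⊆ v →
        (⟨u, hu⟩ : {u : Finset I // u.card = k - 1}) ∈ s) ∧
      (∀ w : Finset I, w ⊆ v → w.card = k → w ∈ S)}

/-- S ⊆ [I]^k is n-clique-free: no n-element w ⊆ I has all its k-element subsets in S. -/
def CliqueFreeSet {I : Type x} (n k : ℕ) (S : Set (Finset I)) : Prop :=
  ¬ ∃ w : Finset I, w.card = n ∧ ∀ v : Finset I, v ⊆ w → v.card = k → v ∈ S

/-- The concrete clique-free copy: S' on I × {0,…,n−2} consisting of the graphs of strictly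
increasing maps h : v → {0,…,n−2}, for v ∈ S. -/
def cliqueFreeify {I : Type x} [LinearOrder I] (n : ℕ) (S : Set (Finset I)) :
    Set (Finset (I × Fin (n - 1))) :=
  {w | ∃ v ∈ S, ∃ h : I → Fin (n - 1), StrictMonoOn h ↑v ∧ w = v.image (fun a => (a, h a))}

/-!
Each `v ∈ S` is replaced by the graphs `{(a, h a) : a ∈ v}` of the strictly increasing maps
`h : v → Fin (n - 1)`. Any two points of a set all of whose `k`-subsets are such graphs lie in a
common `k`-subset (as `k ≥ 2`), hence differ in both coordinates; so such a set has at most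
`n - 1` points, and `S'` is `n`-clique-free. A `(k - 1)`-set `u` is sent to the at most
`C(n - 1, k - 1)` graphs over `u`. An `(n - 1)`-set `v` blocking `t` in `Δ_{n,k}(S)` lifts to the
graph of the increasing bijection `v → Fin (n - 1)`, which blocks the image of `t`; conversely, a
blocker of the image of `t` projects injectively onto a blocker of `t`.
-/

open Finset

variable {α β : Type*}

section Graph

variable [DecidableEq α] [DecidableEq β] {h : α → β} {u v : Finset α}

def graphOn (h : α → β) (u : Finset α) : Finset (α × β) := u.image fun a => (a, h a)

lemma mem_graphOn {p : α × β} : p ∈ graphOn h u ↔ p.1 ∈ u ∧ p.2 = h p.1 := by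
  obtain ⟨a, b⟩ := p
  simp [graphOn, eq_comm]

lemma card_graphOn (h : α → β) (u : Finset α) : #(graphOn h u) = #u :=
  card_image_of_injOn fun _ _ _ _ hab => congrArg Prod.fst hab

lemma image_fst_graphOn (h : α → β) (u : Finset α) : (graphOn h u).image Prod.fst = u := by
  simp [graphOn, image_image, Function.comp_def]

lemma image_snd_graphOn (h : α → β) (u : Finset α) : (graphOn h u).image Prod.snd = u.image h := by
  simp [graphOn, image_image, Function.comp_def]

lemma graphOn_congr {g : α → β} (hhg : Set.EqOn h g u) : graphOn h u = graphOn g u :=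
  image_congr fun a ha => by rw [hhg ha]

lemma subset_graphOn_iff {w : Finset (α × β)} : w ⊆ graphOn h v ↔ ∃ u ⊆ v, w = graphOn h u := by
  refine ⟨fun hw => ⟨w.image Prod.fst, ?_, ?_⟩, ?_⟩
  · simpa only [image_fst_graphOn] using image_subset_image (f := Prod.fst) hw
  · ext p
    simp only [mem_graphOn, mem_image]
    constructor
    · intro hp
      exact ⟨⟨p, hp, rfl⟩, (mem_graphOn.1 (hw hp)).2⟩
    · rintro ⟨⟨q, hq, hqp⟩, hp⟩
      rwa [Prod.ext hqp (by rw [hp, ← hqp, (mem_graphOn.1 (hw hq)).2])] at hq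
  · rintro ⟨u, huv, rfl⟩
    exact image_subset_image huv

lemma injOn_fst_graphOn (h : α → β) (u : Finset α) :
    Set.InjOn Prod.fst (graphOn h u : Set (α × β)) := fun p hp q hq hpq =>
  Prod.ext hpq (by rw [(mem_graphOn.1 hp).2, (mem_graphOn.1 hq).2, hpq])

lemma injOn_snd_graphOn (hh : Set.InjOn h u) :
    Set.InjOn Prod.snd (graphOn h u : Set (α × β)) := fun p hp q hq hpq => by
  rw [mem_coe, mem_graphOn] at hp hq
  exact injOn_fst_graphOn h u (mem_graphOn.2 hp) (mem_graphOn.2 hq)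
    (hh hp.1 hq.1 (by rw [← hp.2, ← hq.2, hpq]))

end Graph

section MonoGraphs

variable [LinearOrder α] [LinearOrder β]

lemma StrictMonoOn.eqOn_of_image_eq {h g : α → β} {u : Finset α} (hh : StrictMonoOn h u)
    (hg : StrictMonoOn g u) (himage : u.image h = u.image g) : Set.EqOn h g u := by
  have hrange : Set.range ((u : Set α).domRestrict h) = Set.range ((u : Set α).domRestrict g) := by
    simpa only [Set.range_domRestrict, coe_image] using congrArg ((↑) : Finset β → Set β) himage
  intro a ha
  exact congrFun ((hh.domRestrict.range_inj hg.domRestrict).1 hrange) ⟨a, ha⟩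

lemma exists_strictMonoOn [Fintype β] [Nonempty β] {v : Finset α} (hv : #v ≤ Fintype.card β) :
    ∃ h : α → β, StrictMonoOn h v := by
  let e : v ↪o β := (v.orderIsoOfFin rfl).symm.toOrderEmbedding.trans <|
    (Fin.castLEOrderEmb hv).trans (Fintype.orderIsoFinOfCardEq β rfl).toOrderEmbedding
  refine ⟨fun a => if ha : a ∈ v then e ⟨a, ha⟩ else Classical.arbitrary β, ?_⟩
  intro a ha b hb hab
  simp only [dif_pos (mem_coe.1 ha), dif_pos (mem_coe.1 hb)]
  exact e.strictMono hab

def monoGraphs (S : Set (Finset α)) : Set (Finset (α × β)) :=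
  {w | ∃ v ∈ S, ∃ h : α → β, StrictMonoOn h v ∧ w = graphOn h v}

lemma cliqueFreeify_eq_monoGraphs {n : ℕ} (S : Set (Finset α)) :
    cliqueFreeify n S = monoGraphs S :=
  rfl

lemma card_of_mem_monoGraphs {S : Set (Finset α)} {m : ℕ} (hS : ∀ v ∈ S, #v = m) :
    ∀ w ∈ monoGraphs (β := β) S, #w = m := by
  rintro w ⟨v, hv, h, -, rfl⟩
  rw [card_graphOn, hS v hv]

lemma injOn_of_forall_subset_mem_monoGraphs {S : Set (Finset α)} {k : ℕ} (hk : 2 ≤ k)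
    {w : Finset (α × β)} (hkw : k ≤ #w) (hw : ∀ x ⊆ w, #x = k → x ∈ monoGraphs S) :
    Set.InjOn Prod.fst (w : Set (α × β)) ∧ Set.InjOn Prod.snd (w : Set (α × β)) := by
  have pair : ∀ p ∈ w, ∀ q ∈ w, ∃ v : Finset α, ∃ h : α → β,
      StrictMonoOn h v ∧ p ∈ graphOn h v ∧ q ∈ graphOn h v := by
    intro p hp q hq
    obtain ⟨x, hpqx, hxw, hx⟩ :=
      exists_subsuperset_card_eq (insert_subset hp (singleton_subset_iff.2 hq))
        (card_le_two.trans hk) hkw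
    obtain ⟨v, -, h, hh, rfl⟩ := hw x hxw hx
    exact ⟨v, h, hh, hpqx (mem_insert_self p {q}), hpqx (mem_insert_of_mem (mem_singleton_self q))⟩
  constructor
  · intro p hp q hq hpq
    obtain ⟨v, h, -, hpv, hqv⟩ := pair p hp q hq
    exact injOn_fst_graphOn h v hpv hqv hpq
  · intro p hp q hq hpq
    obtain ⟨v, h, hh, hpv, hqv⟩ := pair p hp q hq
    exact injOn_snd_graphOn hh.injOn hpv hqv hpq

theorem cliqueFreeSet_monoGraphs [Fintype β] {S : Set (Finset α)} {n k : ℕ} (hk : 2 ≤ k)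
    (hkn : k ≤ n) (hβ : Fintype.card β < n) : CliqueFreeSet n k (monoGraphs (β := β) S) := by
  rintro ⟨w, hwn, hw⟩
  have hcard := card_le_card_of_injOn Prod.snd (fun _ _ => mem_coe.2 (mem_univ _))
    (injOn_of_forall_subset_mem_monoGraphs hk (hwn ▸ hkn) hw).2
  rw [card_univ] at hcard
  omega

end MonoGraphs

section Lift

variable [LinearOrder α] [LinearOrder β] [Fintype β] {m : ℕ}

open Classical in
noncomputable def monoGraphsOver (u : {u : Finset α // #u = m}) :
    Finset {x : Finset (α × β) // #x = m} :=
  ((u.1 ×ˢ univ).powerset.filter fun x => ∃ h : α → β, StrictMonoOn h u.1 ∧ x = graphOn h u.1)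
    |>.subtype fun x => #x = m

lemma mem_monoGraphsOver {u : {u : Finset α // #u = m}} {x : {x : Finset (α × β) // #x = m}} :
    x ∈ monoGraphsOver u ↔ ∃ h : α → β, StrictMonoOn h u.1 ∧ x.1 = graphOn h u.1 := by
  simp only [monoGraphsOver, mem_subtype, mem_filter, mem_powerset, and_iff_right_iff_imp]
  rintro ⟨h, -, hx⟩ p hp
  rw [hx] at hp
  exact mem_product.2 ⟨(mem_graphOn.1 hp).1, mem_univ _⟩

lemma card_monoGraphsOver_le (u : {u : Finset α // #u = m}) :
    #(monoGraphsOver (β := β) u) ≤ (Fintype.card β).choose m := calc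
  #(monoGraphsOver u) ≤ #(powersetCard m (univ : Finset β)) := by
    refine card_le_card_of_injOn (fun x => x.1.image Prod.snd) ?_ ?_
    · intro x hx
      obtain ⟨h, hh, hx⟩ := mem_monoGraphsOver.1 hx
      dsimp only
      rw [mem_coe, mem_powersetCard, hx, image_snd_graphOn, card_image_of_injOn hh.injOn]
      exact ⟨subset_univ _, u.2⟩
    · intro x hx y hy hxy
      obtain ⟨h, hh, hx⟩ := mem_monoGraphsOver.1 hx
      obtain ⟨g, hg, hy⟩ := mem_monoGraphsOver.1 hy
      simp only [hx, hy, image_snd_graphOn] at hxy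
      exact Subtype.ext (by rw [hx, hy, graphOn_congr (hh.eqOn_of_image_eq hg hxy)])
  _ = (Fintype.card β).choose m := by rw [card_powersetCard, card_univ]

end Lift

theorem isInstanceOf_patternPow {J I : Type*} [DecidableEq I] {Δ' : Set (Finset J)}
    {Δ : Set (Finset I)} {m : ℕ} (F : J → Finset I) (hF : ∀ j, #(F j) ≤ m)
    (hΔ : ∀ t : Finset J, t ∈ Δ' ↔ t.sup F ∈ Δ) : IsInstanceOf Δ' (patternPow Δ m) := by
  refine fun _ => ⟨fun j => ⟨F j, hF j⟩, fun t _ => ?_⟩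
  -- `patternPow` and `IsInstanceOf` use classical `DecidableEq` instances; `convert` absorbs them.
  rw [hΔ, patternPow, Set.mem_ofPred_eq]
  convert Iff.rfl using 2
  convert sup_image t _ _ using 4
  rfl

section Blocker

variable {n k : ℕ}

def IsBlocker (n k : ℕ) (S : Set (Finset α)) (s : Finset {u : Finset α // #u = k - 1})
    (v : Finset α) : Prop :=
  #v = n - 1 ∧ (∀ (u : Finset α) (hu : #u = k - 1), u ⊆ v → (⟨u, hu⟩ : {u // #u = k - 1}) ∈ s) ∧
    ∀ w ⊆ v, #w = k → w ∈ S

lemma mem_deltaNK_iff {S : Set (Finset α)} {s : Finset {u : Finset α // #u = k - 1}} :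
    s ∈ deltaNK n k S ↔ ¬ ∃ v, IsBlocker n k S s v :=
  Iff.rfl

variable [LinearOrder α] [LinearOrder β] [Fintype β] {S : Set (Finset α)}
  {t : Finset {u : Finset α // #u = k - 1}}

lemma IsBlocker.graphOn {v : Finset α} (hv : IsBlocker n k S t v) {h : α → β}
    (hh : StrictMonoOn h v) :
    IsBlocker n k (monoGraphs S) (t.sup monoGraphsOver) (graphOn h v) := by
  obtain ⟨hvn, hvt, hvS⟩ := hv
  refine ⟨by rw [card_graphOn, hvn], fun x hx hxv => ?_, fun w hwv hw => ?_⟩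
  · obtain ⟨u, huv, rfl⟩ := subset_graphOn_iff.1 hxv
    have hu : #u = k - 1 := card_graphOn h u ▸ hx
    exact mem_sup.2 ⟨⟨u, hu⟩, hvt u hu huv,
      mem_monoGraphsOver.2 ⟨h, hh.mono (coe_subset.2 huv), rfl⟩⟩
  · obtain ⟨u, huv, rfl⟩ := subset_graphOn_iff.1 hwv
    exact ⟨u, hvS u huv (card_graphOn h u ▸ hw), h, hh.mono (coe_subset.2 huv), rfl⟩

lemma IsBlocker.image_fst (hk : 2 ≤ k) (hkn : k < n) {v : Finset (α × β)}
    (hv : IsBlocker n k (monoGraphs S) (t.sup monoGraphsOver) v) :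
    IsBlocker n k S t (v.image Prod.fst) := by
  obtain ⟨hvn, hvt, hvS⟩ := hv
  have hinj := (injOn_of_forall_subset_mem_monoGraphs hk (by omega) hvS).1
  have card_fst : ∀ x ⊆ v, #(x.image Prod.fst) = #x := fun x hx =>
    card_image_of_injOn (hinj.mono (coe_subset.2 hx))
  refine ⟨(card_fst v subset_rfl).trans hvn, fun u hu huv => ?_, fun w hwv hw => ?_⟩
  · obtain ⟨x, hxv, rfl⟩ := subset_image_iff.1 huv
    obtain ⟨u₀, hu₀t, hx⟩ := mem_sup.1 (hvt x ((card_fst x hxv).symm.trans hu) hxv)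
    obtain ⟨h, -, hxu₀ : x = _⟩ := mem_monoGraphsOver.1 hx
    have hu₀ : (⟨x.image Prod.fst, hu⟩ : {u // #u = k - 1}) = u₀ :=
      Subtype.ext ((congrArg (image Prod.fst) hxu₀).trans (image_fst_graphOn h u₀))
    exact hu₀ ▸ hu₀t
  · obtain ⟨x, hxv, rfl⟩ := subset_image_iff.1 hwv
    obtain ⟨w₀, hw₀, h, -, hx⟩ := hvS x hxv ((card_fst x hxv).symm.trans hw)
    rwa [hx, image_fst_graphOn]

theorem mem_deltaNK_iff_sup_mem [Nonempty β] (hk : 2 ≤ k) (hkn : k < n)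
    (hβ : n - 1 ≤ Fintype.card β) (S : Set (Finset α)) (t : Finset {u : Finset α // #u = k - 1}) :
    t ∈ deltaNK n k S ↔ t.sup (monoGraphsOver (β := β)) ∈ deltaNK n k (monoGraphs S) := by
  rw [mem_deltaNK_iff, mem_deltaNK_iff, not_iff_not]
  constructor
  · rintro ⟨v, hv⟩
    obtain ⟨h, hh⟩ := exists_strictMonoOn (β := β) (hv.1.trans_le hβ)
    exact ⟨_, hv.graphOn hh⟩
  · rintro ⟨v, hv⟩
    exact ⟨_, hv.image_fst hk hkn⟩

end Blocker

theorem statement6 {I : Type x} [LinearOrder I] (n k : ℕ) (h2 : 2 ≤ k) (hkn : k < n)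
    (S : Set (Finset I)) (hS : ∀ v ∈ S, v.card = k) :
    (∀ w ∈ cliqueFreeify n S, w.card = k) ∧
    CliqueFreeSet n k (cliqueFreeify n S) ∧
    IsInstanceOf (deltaNK n k S)
      (patternPow (deltaNK n k (cliqueFreeify n S)) ((n - 1).choose (k - 1))) ∧
    ∃ (istar : ℕ) (I' : Type x) (S' : Set (Finset I')),
      (∀ v ∈ S', v.card = k) ∧ CliqueFreeSet n k S' ∧
      IsInstanceOf (deltaNK n k S) (patternPow (deltaNK n k S') istar) := by
  rw [cliqueFreeify_eq_monoGraphs]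
  have hS' : ∀ w ∈ monoGraphs (β := Fin (n - 1)) S, #w = k := card_of_mem_monoGraphs hS
  have hfree : CliqueFreeSet n k (monoGraphs (β := Fin (n - 1)) S) :=
    cliqueFreeSet_monoGraphs h2 hkn.le (by rw [Fintype.card_fin]; omega)
  have : Nonempty (Fin (n - 1)) := ⟨⟨0, by omega⟩⟩
  have hinst : IsInstanceOf (deltaNK n k S)
      (patternPow (deltaNK n k (monoGraphs (β := Fin (n - 1)) S)) ((n - 1).choose (k - 1))) :=
    isInstanceOf_patternPow _
      (fun u => (card_monoGraphsOver_le u).trans_eq (by rw [Fintype.card_fin]))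
      (mem_deltaNK_iff_sup_mem h2 hkn (Fintype.card_fin _).ge S)
  exact ⟨hS', hfree, hinst, _, _, _, hS', hfree, hinst⟩
end

section
/- Suppose 2 ≤ k < n ≤ n', let I be an index set, and let S ⊆ [I]^k. Then there exist an index set I' ⊇ I, a set S' ⊆ [I']^k, and i* < ω such that Δ_{n,k}(S) is an instance of Δ_{n',k}(S')^{i*}. Concretely one may take I' = I ∪ u* where u* is a new (n'−n)-element set, S' = S ∪ { v' ∈ [I']^k : v' ∩ u* ≠ ∅ }, and i* = C(k−1+(n'−n), k−1). -/
universe x y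

/-- S' = S ∪ { v' ∈ [I ∪ u*]^k : v' ∩ u* ≠ ∅ }, where u* is a new d-element set. -/
def padS {I : Type x} (k d : ℕ) (S : Set (Finset I)) : Set (Finset (I ⊕ Fin d)) :=
  letI := Classical.decEq I
  {w | (∃ v ∈ S, w = v.image Sum.inl) ∨ (w.card = k ∧ ∃ p ∈ w, p.isRight = true)}

/-!
Send a `(k-1)`-set `u ⊆ I` to the family of `(k-1)`-subsets of `u ∪ u*`; there are
`C(k-1+d, k-1)` of them, `d = n' - n`. If `v` spans an `(n-1)`-clique for a family `t` of
`(k-1)`-sets and `S`, then `v ∪ u*` spans an `(n'-1)`-clique for the union of the images of `t`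
and `S'`: the `k`-sets meeting `u*`
are in `S'` by construction, and a `(k-1)`-subset of `v ∪ u*` lies in `u ∪ u*` for some
`(k-1)`-set `u ⊆ v` containing its old points. Conversely an `(n'-1)`-clique has at least
`n-1` points outside `u*`, and on those it is a clique for `t` and `S`, because a `(k-1)`-subset
of `I` lies in `u ∪ u*` only if it is `u`.
-/

open Finset

section
variable {I : Type x} {k n n' d : ℕ} {S : Set (Finset I)}

lemma mem_padS_iff {w : Finset (I ⊕ Fin d)} :
    w ∈ padS k d S ↔ (∃ v ∈ S, w = v.map .inl) ∨ (w.card = k ∧ w.toRight.Nonempty) := by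
  classical
  simp only [padS, map_eq_image, Finset.Nonempty, mem_toRight, Set.mem_ofPred_eq]
  congr! 4
  simp [Sum.exists]

lemma card_of_mem_padS (hS : ∀ v ∈ S, v.card = k) : ∀ w ∈ padS k d S, w.card = k := by
  intro w hw
  rcases mem_padS_iff.1 hw with ⟨v, hv, rfl⟩ | ⟨hw, -⟩
  · rw [card_map, hS v hv]
  · exact hw

lemma mem_patternPow_iff [inst : DecidableEq I] {Δ : Set (Finset I)} {m : ℕ}
    {s : Finset {u : Finset I // u.card ≤ m}} :
    s ∈ patternPow Δ m ↔ s.sup Subtype.val ∈ Δ := by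
  rw [Subsingleton.elim inst (Classical.decEq I)]
  rfl

def IsPatternClique (k : ℕ) (s : Finset {u : Finset I // u.card = k - 1}) (S : Set (Finset I))
    (v : Finset I) : Prop :=
  (∀ (u : Finset I) (hu : u.card = k - 1), u ⊆ v →
      (⟨u, hu⟩ : {u : Finset I // u.card = k - 1}) ∈ s) ∧
    ∀ w ⊆ v, w.card = k → w ∈ S

lemma mem_deltaNK_iff_s7 {s : Finset {u : Finset I // u.card = k - 1}} :
    s ∈ deltaNK n k S ↔ ∀ v : Finset I, v.card = n - 1 → ¬ IsPatternClique k s S v := by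
  simp [deltaNK, IsPatternClique]

lemma IsPatternClique.mono {s : Finset {u : Finset I // u.card = k - 1}} {v v' : Finset I}
    (h : IsPatternClique k s S v) (hv : v' ⊆ v) : IsPatternClique k s S v' :=
  ⟨fun u hu huv => h.1 u hu (huv.trans hv), fun w hwv => h.2 w (hwv.trans hv)⟩

/-- The `(k-1)`-subsets of `u ∪ u*`, the new points `u*` being the right summand `Fin d`. -/
def starShadow (k d : ℕ) (u : Finset I) : Finset {w : Finset (I ⊕ Fin d) // w.card = k - 1} :=
  ((u.disjSum univ).powersetCard (k - 1)).subtype _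

lemma mem_starShadow {u : Finset I} {w : {w : Finset (I ⊕ Fin d) // w.card = k - 1}} :
    w ∈ starShadow k d u ↔ w.1.toLeft ⊆ u := by
  simp [starShadow, mem_powersetCard, subset_disjSum, w.2]

lemma card_starShadow_le (u : Finset I) :
    (starShadow k d u).card ≤ (u.card + d).choose (k - 1) :=
  calc (starShadow k d u).card ≤ ((u.disjSum univ).powersetCard (k - 1)).card := by
        rw [starShadow, card_subtype]; exact card_filter_le _ _
    _ = (u.card + d).choose (k - 1) := by
        rw [card_powersetCard, card_disjSum, card_univ, Fintype.card_fin]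

section Clique
variable [DecidableEq I] {t : Finset {u : Finset I // u.card = k - 1}} {v : Finset I}

lemma IsPatternClique.disjSum_univ (h : IsPatternClique k t S v) (hk : k - 1 ≤ v.card) :
    IsPatternClique k (t.sup fun u => starShadow k d u.1) (padS k d S) (v.disjSum univ) := by
  refine ⟨fun u' hu' hu'v => ?_, fun w' hw'v hw' => mem_padS_iff.2 ?_⟩
  · obtain ⟨u, hu'u, huv, hu⟩ :=
      exists_subsuperset_card_eq (subset_disjSum.1 hu'v).1 (card_toLeft_le.trans hu'.le) hk
    exact mem_sup.2 ⟨⟨u, hu⟩, h.1 u hu huv, mem_starShadow.2 hu'u⟩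
  rcases w'.toRight.eq_empty_or_nonempty with hr | hr
  · have hw'eq : w' = w'.toLeft.map .inl := by
      rw [← disjSum_empty, ← hr, toLeft_disjSum_toRight]
    have hcard : w'.toLeft.card = k := by
      rw [← hw', ← card_toLeft_add_card_toRight, hr, card_empty, add_zero]
    exact Or.inl ⟨w'.toLeft, h.2 _ (subset_disjSum.1 hw'v).1 hcard, hw'eq⟩
  · exact Or.inr ⟨hw', hr⟩

lemma IsPatternClique.of_map_inl
    (h : IsPatternClique k (t.sup fun u => starShadow k d u.1) (padS k d S) (v.map .inl)) :
    IsPatternClique k t S v := by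
  refine ⟨fun u hu huv => ?_, fun w hwv hw => ?_⟩
  · obtain ⟨⟨u₁, hu₁⟩, hu₁t, huu₁⟩ :=
      mem_sup.1 (h.1 (u.map .inl) (by rwa [card_map]) (map_subset_map.2 huv))
    have huu₁ : u ⊆ u₁ :=
      (map_inl_subset_iff_subset_toLeft.1 subset_rfl).trans (mem_starShadow.1 huu₁)
    obtain rfl : u = u₁ := eq_of_subset_of_card_le huu₁ (by rw [hu, hu₁])
    exact hu₁t
  · rcases mem_padS_iff.1 (h.2 (w.map .inl) (map_subset_map.2 hwv) (by rwa [card_map])) with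
      ⟨w₀, hw₀, hw⟩ | ⟨-, hr⟩
    · rwa [map_injective _ hw]
    · simp [← disjSum_empty] at hr

end Clique

theorem mem_deltaNK_iff_sup_starShadow_mem [DecidableEq I] (hkn : k ≤ n) (hn : 0 < n)
    (hnn' : n ≤ n') (t : Finset {u : Finset I // u.card = k - 1}) :
    t ∈ deltaNK n k S ↔
      (t.sup fun u => starShadow k (n' - n) u.1) ∈ deltaNK n' k (padS k (n' - n) S) := by
  rw [mem_deltaNK_iff_s7, mem_deltaNK_iff_s7]
  constructor
  · intro hfree v' hv' hclique
    have hleft : n - 1 ≤ v'.toLeft.card := by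
      have hsplit := card_toLeft_add_card_toRight (u := v')
      have hright : v'.toRight.card ≤ n' - n := (card_le_univ _).trans_eq (Fintype.card_fin _)
      omega
    obtain ⟨v, hvv', hv⟩ := exists_subset_card_eq hleft
    exact hfree v hv (hclique.mono (map_inl_subset_iff_subset_toLeft.2 hvv')).of_map_inl
  · intro hfree v hv hclique
    refine hfree _ ?_ (hclique.disjSum_univ (by omega))
    rw [card_disjSum, card_univ, Fintype.card_fin]
    omega

theorem isInstanceOf_deltaNK_patternPow (hkn : k ≤ n) (hn : 0 < n) (hnn' : n ≤ n') :
    IsInstanceOf (deltaNK n k S)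
      (patternPow (deltaNK n' k (padS k (n' - n) S)) ((k - 1 + (n' - n)).choose (k - 1))) := by
  classical
  intro _
  refine ⟨fun u => ⟨starShadow k (n' - n) u.1, ?_⟩, fun t _ => ?_⟩
  · simpa only [u.2] using card_starShadow_le u.1
  simp only [mem_patternPow_iff, sup_image]
  exact mem_deltaNK_iff_sup_starShadow_mem hkn hn hnn' t

end

theorem statement7_general {I : Type x} (n n' k : ℕ) (hkn : k < n) (hnn' : n ≤ n')
    (S : Set (Finset I)) (hS : ∀ v ∈ S, v.card = k) :
    (∀ w ∈ padS k (n' - n) S, w.card = k) ∧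
    IsInstanceOf (deltaNK n k S)
      (patternPow (deltaNK n' k (padS k (n' - n) S)) ((k - 1 + (n' - n)).choose (k - 1))) ∧
    ∃ (I' : Type x) (_ : I ↪ I') (S' : Set (Finset I')) (istar : ℕ),
      (∀ v ∈ S', v.card = k) ∧
      IsInstanceOf (deltaNK n k S) (patternPow (deltaNK n' k S') istar) := by
  have hinst := isInstanceOf_deltaNK_patternPow (S := S) hkn.le (by omega) hnn'
  exact ⟨card_of_mem_padS hS, hinst, I ⊕ Fin (n' - n), .inl, padS k (n' - n) S, _,
    card_of_mem_padS hS, hinst⟩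

theorem statement7 {I : Type x} (n n' k : ℕ) (h2 : 2 ≤ k) (hkn : k < n) (hnn' : n ≤ n')
    (S : Set (Finset I)) (hS : ∀ v ∈ S, v.card = k) :
    (∀ w ∈ padS k (n' - n) S, w.card = k) ∧
    IsInstanceOf (deltaNK n k S)
      (patternPow (deltaNK n' k (padS k (n' - n) S)) ((k - 1 + (n' - n)).choose (k - 1))) ∧
    ∃ (I' : Type x) (_ : I ↪ I') (S' : Set (Finset I')) (istar : ℕ),
      (∀ v ∈ S', v.card = k) ∧
      IsInstanceOf (deltaNK n k S) (patternPow (deltaNK n' k S') istar) :=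
  statement7_general n n' k hkn hnn' S hS
end

section
/- Let B be a complete Boolean algebra, U an ultrafilter on B, n a U-nonstandard name for a natural number, λ an infinite cardinal, and D a multiplicative λ-distribution in U. Then the following are equivalent: (A) for every finite s ⊆ λ, D(s) ≤ ‖n ≥ |s|‖; (B) D is λ-regular, and for every nonzero c ∈ B that decides D({α}) for every α < λ, the set {α < λ : c ≤ D({α})} is finite, and writing m for its cardinality, c ≤ ‖n ≥ m‖. -/
/-
Write `a α := D {α}`, so that `D s = ⨅_{α ∈ s} a α`. Since the values of a name partition `⊤`,
`nm k` is disjoint from `‖n ≥ k + 1‖`. Hence if every `D s` lies below `‖n ≥ |s|‖`, then below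
`b ⊓ nm k` no `k + 1` of the `a α` have a common nonzero part, and for a maximal finite `s` with
`b ⊓ nm k ⊓ D s ≠ ⊥` this element decides every `a α`. Conversely, an element deciding every
`a α` and lying below `D s \ ‖n ≥ |s|‖` lies below `a α` for all `α ∈ s`, hence below
`‖n ≥ |s|‖`, which is absurd.
-/

universe u

section BA

variable {B : Type u} [CompleteBooleanAlgebra B]

/-- U is an ultrafilter on the complete Boolean algebra B. -/
def IsUltra (U : Set B) : Prop :=
  ⊤ ∈ U ∧ ⊥ ∉ U ∧ (∀ a ∈ U, ∀ b : B, a ≤ b → b ∈ U) ∧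
    (∀ a ∈ U, ∀ b ∈ U, a ⊓ b ∈ U) ∧ ∀ a : B, a ∈ U ∨ aᶜ ∈ U

/-- c decides b if c ≤ b or c ≤ bᶜ. -/
def Decides (c b : B) : Prop := c ≤ b ∨ c ≤ bᶜ

/-- A λ-distribution (with index set ι of cardinality λ): a map from finite subsets of λ to
the nonzero elements of B, sending ∅ to ⊤ and reversing inclusions. -/
def IsDistribution {ι : Type*} (A : Finset ι → B) : Prop :=
  (∀ s, A s ≠ ⊥) ∧ A ∅ = ⊤ ∧ ∀ s t : Finset ι, t ⊆ s → A s ≤ A t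

/-- A distribution is multiplicative if A(s) = ⨅_{α∈s} A({α}). -/
def IsMultiplicative {ι : Type*} (A : Finset ι → B) : Prop :=
  ∀ s : Finset ι, A s = s.inf (fun α => A {α})

/-- A family (a_α)_{α<λ} is λ-regular: finite subfamilies have nonzero meet, infinite
subfamilies have meet ⊥, and the nonzero elements deciding every a_α are dense in B₊. -/
def IsRegularFamily {ι : Type*} (a : ι → B) : Prop :=
  (∀ s : Finset ι, s.inf a ≠ ⊥) ∧
  (∀ X : Set ι, X.Infinite → (⨅ α ∈ X, a α) = ⊥) ∧
  (∀ b : B, b ≠ ⊥ → ∃ c : B, c ≠ ⊥ ∧ c ≤ b ∧ ∀ α : ι, Decides c (a α))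

/-- A name for a natural number: a map n : ω → B with pairwise disjoint values
whose supremum is ⊤. -/
def IsName (nm : ℕ → B) : Prop :=
  (∀ i j : ℕ, i ≠ j → Disjoint (nm i) (nm j)) ∧ (⨆ m : ℕ, nm m) = ⊤

/-- ‖n ≥ m‖ := ⨆_{j≥m} n(j). -/
def nameGe (nm : ℕ → B) (m : ℕ) : B := ⨆ j : ℕ, ⨆ _ : m ≤ j, nm j

/-- n is U-nonstandard if ‖n ≥ m‖ ∈ U for every m. -/
def IsNonstandardName (U : Set B) (nm : ℕ → B) : Prop := ∀ m : ℕ, nameGe nm m ∈ U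

/-- U is ℵ₁-incomplete: some decreasing ω-sequence from U has infimum ⊥. -/
def Aleph1Incomplete (U : Set B) : Prop :=
  ∃ c : ℕ → B, (∀ k, c k ∈ U) ∧ Antitone c ∧ (⨅ k : ℕ, c k) = ⊥

lemma nameGe_antitone (nm : ℕ → B) : Antitone (nameGe nm) :=
  fun _ _ h => iSup₂_le fun j hj => le_iSup₂_of_le j (h.trans hj) le_rfl

lemma disjoint_nameGe_succ {nm : ℕ → B} (hd : Pairwise fun i j => Disjoint (nm i) (nm j))
    (k : ℕ) : Disjoint (nm k) (nameGe nm (k + 1)) := by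
  simp only [nameGe, disjoint_iSup_iff]
  exact fun j hj => hd (by omega)

lemma exists_inf_ne_bot_of_iSup_eq_top {α κ : Type*} [Order.Frame α] {f : κ → α}
    (hf : ⨆ i, f i = ⊤) {b : α} (hb : b ≠ ⊥) : ∃ i, b ⊓ f i ≠ ⊥ := by
  by_contra! h
  apply hb
  rw [← inf_top_eq b, ← hf, inf_iSup_eq]
  exact iSup_eq_bot.mpr h

lemma IsName.eq_bot_of_forall_le_nameGe {nm : ℕ → B} (hname : IsName nm) {b : B}
    (hb : ∀ m, b ≤ nameGe nm m) : b = ⊥ := by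
  by_contra hb0
  obtain ⟨k, hk⟩ := exists_inf_ne_bot_of_iSup_eq_top hname.2 hb0
  exact hk (disjoint_iff.mp
    ((disjoint_nameGe_succ (fun i j => hname.1 i j) k).symm.mono_left (hb (k + 1))))

lemma Finset.exists_forall_insert_not_of_card_le {ι : Type*} [DecidableEq ι]
    {P : Finset ι → Prop} (h0 : P ∅) {k : ℕ} (hk : ∀ s, P s → s.card ≤ k) :
    ∃ s, P s ∧ ∀ α ∉ s, ¬ P (insert α s) := by
  obtain ⟨s, hs, hmin⟩ := (measure fun s : Finset ι => k - s.card).wf.has_min {s | P s} ⟨∅, h0⟩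
  refine ⟨s, hs, fun α hα hins => hmin _ hins ?_⟩
  have hle := hk _ hins
  show k - (insert α s).card < k - s.card
  rw [Finset.card_insert_of_notMem hα] at hle ⊢
  omega

section Regularity

variable {ι : Type*} {nm : ℕ → B} {a : ι → B}

lemma iInf_eq_bot_of_infinite (hname : IsName nm)
    (hA : ∀ s : Finset ι, s.inf a ≤ nameGe nm s.card) {X : Set ι} (hX : X.Infinite) :
    ⨅ α ∈ X, a α = ⊥ := by
  refine hname.eq_bot_of_forall_le_nameGe fun m => ?_
  obtain ⟨s, hsX, rfl⟩ := hX.exists_subset_card_eq m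
  exact (Finset.le_inf fun α hα => iInf₂_le α (hsX hα)).trans (hA s)

lemma finite_setOf_le_of_ne_bot (hname : IsName nm)
    (hA : ∀ s : Finset ι, s.inf a ≤ nameGe nm s.card) {c : B} (hc : c ≠ ⊥) :
    {α | c ≤ a α}.Finite := by
  by_contra hinf
  exact hc (eq_bot_iff.mpr
    (iInf_eq_bot_of_infinite hname hA hinf ▸ le_iInf₂ fun _ hα => hα))

lemma le_nameGe_card_setOf_le (hA : ∀ s : Finset ι, s.inf a ≤ nameGe nm s.card) {c : B}
    (hfin : {α | c ≤ a α}.Finite) : c ≤ nameGe nm (Nat.card {α | c ≤ a α}) := by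
  rw [Nat.card_coe_set_eq, Set.ncard_eq_toFinset_card _ hfin]
  exact (Finset.le_inf fun α hα => hfin.mem_toFinset.mp hα).trans (hA _)

lemma exists_le_forall_decides (hname : IsName nm)
    (hA : ∀ s : Finset ι, s.inf a ≤ nameGe nm s.card) {b : B} (hb : b ≠ ⊥) :
    ∃ c, c ≠ ⊥ ∧ c ≤ b ∧ ∀ α, Decides c (a α) := by
  classical
  obtain ⟨k, hk⟩ := exists_inf_ne_bot_of_iSup_eq_top hname.2 hb
  have hcard : ∀ s : Finset ι, b ⊓ nm k ⊓ s.inf a ≠ ⊥ → s.card ≤ k := by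
    intro s hs
    by_contra! hlt
    have hle : s.inf a ≤ nameGe nm (k + 1) := (hA s).trans (nameGe_antitone nm hlt)
    exact hs (disjoint_iff.mp ((disjoint_nameGe_succ (fun i j => hname.1 i j) k).mono
      inf_le_right hle))
  obtain ⟨s, hs, hmax⟩ := Finset.exists_forall_insert_not_of_card_le
    (P := fun s => b ⊓ nm k ⊓ s.inf a ≠ ⊥) (by simpa using hk) hcard
  refine ⟨_, hs, inf_le_left.trans inf_le_left, fun α => ?_⟩
  by_cases hα : α ∈ s
  · exact Or.inl (inf_le_right.trans (Finset.inf_le hα))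
  · refine Or.inr (le_compl_iff_disjoint_right.mpr (disjoint_iff.mpr ?_))
    have := not_not.mp (hmax α hα)
    rwa [Finset.inf_insert, inf_left_comm, inf_comm (a α)] at this

lemma inf_le_nameGe_card_of_dense
    (hdense : ∀ b : B, b ≠ ⊥ → ∃ c : B, c ≠ ⊥ ∧ c ≤ b ∧ ∀ α : ι, Decides c (a α))
    (hB : ∀ c : B, c ≠ ⊥ → (∀ α : ι, Decides c (a α)) →
      {α : ι | c ≤ a α}.Finite ∧ c ≤ nameGe nm (Nat.card {α : ι | c ≤ a α}))
    (s : Finset ι) : s.inf a ≤ nameGe nm s.card := by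
  by_contra h
  obtain ⟨c, hc, hcb, hdec⟩ := hdense _ (mt sdiff_eq_bot_iff.mp h)
  obtain ⟨hfin, hle⟩ := hB c hc hdec
  have hsub : (s : Set ι) ⊆ {α | c ≤ a α} :=
    fun α hα => (hcb.trans sdiff_le).trans (Finset.inf_le hα)
  have hcard : s.card ≤ Nat.card {α | c ≤ a α} := by
    rw [Nat.card_coe_set_eq, ← Set.ncard_coe_finset]
    exact Set.ncard_le_ncard hsub hfin
  exact hc ((disjoint_sdiff_self_left.mono_left hcb).eq_bot_of_le
    (hle.trans (nameGe_antitone nm hcard)))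

end Regularity

theorem statement10_general {B : Type u} [CompleteBooleanAlgebra B]
    (nm : ℕ → B) (hname : IsName nm)
    (ι : Type u)
    (D : Finset ι → B) (hD : IsDistribution D)
    (hmul : IsMultiplicative D) :
    (∀ s : Finset ι, D s ≤ nameGe nm s.card) ↔
      (IsRegularFamily (fun α : ι => D {α}) ∧
        ∀ c : B, c ≠ ⊥ → (∀ α : ι, Decides c (D {α})) →
          ({α : ι | c ≤ D {α}}.Finite ∧ c ≤ nameGe nm (Nat.card {α : ι | c ≤ D {α}}))) := by
  constructor
  · intro hle
    have hA : ∀ s : Finset ι, s.inf (fun α => D {α}) ≤ nameGe nm s.card :=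
      fun s => hmul s ▸ hle s
    refine ⟨⟨fun s => hmul s ▸ hD.1 s, fun X => iInf_eq_bot_of_infinite hname hA,
      fun b => exists_le_forall_decides hname hA⟩, fun c hc _ => ?_⟩
    have hfin := finite_setOf_le_of_ne_bot hname hA hc
    exact ⟨hfin, le_nameGe_card_setOf_le hA hfin⟩
  · rintro ⟨⟨-, -, hdense⟩, hB⟩ s
    rw [hmul s]
    exact inf_le_nameGe_card_of_dense hdense hB s

theorem statement10 {B : Type u} [CompleteBooleanAlgebra B] (U : Set B) (hU : IsUltra U)
    (nm : ℕ → B) (hname : IsName nm) (hns : IsNonstandardName U nm)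
    (lam : Cardinal.{u}) (hlam : Cardinal.aleph0 ≤ lam)
    (ι : Type u) (hι : Cardinal.mk ι = lam)
    (D : Finset ι → B) (hD : IsDistribution D) (hDU : ∀ s, D s ∈ U)
    (hmul : IsMultiplicative D) :
    (∀ s : Finset ι, D s ≤ nameGe nm s.card) ↔
      (IsRegularFamily (fun α : ι => D {α}) ∧
        ∀ c : B, c ≠ ⊥ → (∀ α : ι, Decides c (D {α})) →
          ({α : ι | c ≤ D {α}}.Finite ∧ c ≤ nameGe nm (Nat.card {α : ι | c ≤ D {α}}))) :=
  statement10_general nm hname ι D hD hmul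

end BA
end

section
/- Let B be a complete Boolean algebra, let U be a nonprincipal ultrafilter on B, write λ = c.c.(B), and let σ be the least cardinal such that there is a decreasing sequence (a_α)_{α<σ} of elements of U with ⨅_{α<σ} a_α = ⊥. Then σ < λ, and there is a maximal antichain (c_γ)_{γ<σ} of B (pairwise disjoint nonzero elements with ⨆_{γ<σ} c_γ = ⊤) of cardinality σ such that for every X ⊆ σ with |X| < σ, ⨆_{γ∈X} c_γ ∉ U. -/
universe u

section BA

variable {B : Type u} [CompleteBooleanAlgebra B]

/-- An antichain in B: a set of pairwise-disjoint nonzero elements. -/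
def IsAntichainIn {B : Type*} [CompleteBooleanAlgebra B] (A : Set B) : Prop :=
  (∀ a ∈ A, a ≠ ⊥) ∧ A.Pairwise (fun a b => a ⊓ b = ⊥)

/-- c.c.(B): the least cardinal κ such that B has no antichain of cardinality κ. -/
noncomputable def ccOf (B : Type u) [CompleteBooleanAlgebra B] : Cardinal.{u} :=
  sInf {κ : Cardinal.{u} | ¬ ∃ A : Set B, IsAntichainIn A ∧ Cardinal.mk A = κ}

/-- A is a (λ, Δ)-distribution: for every finite s ⊆ λ and nonzero c deciding A(t) for all
t ⊆ s, there is f : s → I with, for all t ⊆ s, c ≤ A(t) iff f[t] ∈ Δ. -/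
def IsDeltaDistribution {B : Type*} [CompleteBooleanAlgebra B] {ι : Type*} {I : Type*}
    (A : Finset ι → B) (Δ : Set (Finset I)) : Prop :=
  ∀ (s : Finset ι) (c : B), c ≠ ⊥ → (∀ t ⊆ s, Decides c (A t)) →
    ∃ f : ι → I, ∀ t ⊆ s, (c ≤ A t ↔ (letI := Classical.decEq I; t.image f) ∈ Δ)

/-- A complete embedding of complete Boolean algebras: an injective homomorphism preserving
arbitrary suprema and infima. -/
def IsCompleteEmbedding {B : Type*} {B' : Type*} [CompleteBooleanAlgebra B]
    [CompleteBooleanAlgebra B'] (e : B → B') : Prop :=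
  Function.Injective e ∧ (∀ a b : B, e (a ⊓ b) = e a ⊓ e b) ∧
    (∀ a b : B, e (a ⊔ b) = e a ⊔ e b) ∧ (∀ a : B, e aᶜ = (e a)ᶜ) ∧
    (∀ S : Set B, e (sSup S) = sSup (e '' S)) ∧ (∀ S : Set B, e (sInf S) = sInf (e '' S))

/-- The set of cardinals κ such that some decreasing κ-sequence from U has infimum ⊥;
its least element is the completeness of U. -/
def complSpec {B : Type u} [CompleteBooleanAlgebra B] (U : Set B) : Set Cardinal.{u} :=
  {κ : Cardinal.{u} | ∃ a : κ.ord.ToType → B,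
    (∀ α, a α ∈ U) ∧ Antitone a ∧ (⨅ α, a α) = ⊥}

/-!
Fix a decreasing sequence `(a α)_{α < σ}` in `U` with meet `⊥`. Reindexing it along a cofinal
subset of `σ` of order type `cf σ` gives `σ ≤ cf σ`, so every set of fewer than `σ` indices is
bounded. The transfinite disjointification `c α = (a α)ᶜ \ ⨆_{β<α} (a β)ᶜ` is pairwise disjoint
with join `(⨅ α, a α)ᶜ = ⊤`, and the join of fewer than `σ` of its terms lies below some
`(a β)ᶜ ∉ U`. Since `⊤ ∈ U`, the nonzero terms cannot be fewer than `σ`; they form an antichain of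
size `σ`, whence `σ < c.c.(B)`.

That `σ` is attained at all comes from a well-ordering of `U`: its partial meets stay in `U` up to
a first failure at `θ`, and below `θ` they decrease to the meet `m ∉ U`, so cutting them with `mᶜ`
yields a decreasing sequence in `U` with meet `⊥`.
-/

open Cardinal Function

section WfDisjointed

variable {α ι : Type*} [CompleteBooleanAlgebra α] [LinearOrder ι]

/-- Transfinite analogue of `disjointed`, which requires a locally finite order. -/
def wfDisjointed (f : ι → α) (i : ι) : α :=
  f i \ ⨆ j < i, f j

lemma wfDisjointed_le (f : ι → α) (i : ι) : wfDisjointed f i ≤ f i :=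
  sdiff_le

lemma disjoint_wfDisjointed_of_lt (f : ι → α) {i j : ι} (h : j < i) :
    Disjoint (f j) (wfDisjointed f i) :=
  disjoint_sdiff_self_right.mono_left (le_iSup₂ (f := fun j _ => f j) j h)

lemma pairwise_disjoint_wfDisjointed (f : ι → α) : Pairwise (Disjoint on wfDisjointed f) := by
  intro i j hij
  rcases lt_or_gt_of_ne hij with h | h
  · exact (disjoint_wfDisjointed_of_lt f h).mono_left (wfDisjointed_le f i)
  · exact ((disjoint_wfDisjointed_of_lt f h).mono_left (wfDisjointed_le f j)).symm

lemma iSup_wfDisjointed [WellFoundedLT ι] (f : ι → α) :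
    ⨆ i, wfDisjointed f i = ⨆ i, f i := by
  refine le_antisymm (iSup_mono (wfDisjointed_le f)) (iSup_le fun i => ?_)
  induction i using WellFoundedLT.induction with
  | _ i ih =>
    calc f i ≤ wfDisjointed f i ⊔ ⨆ j < i, f j := le_sdiff_sup
      _ ≤ ⨆ i, wfDisjointed f i := sup_le (le_iSup _ i) (iSup₂_le ih)

end WfDisjointed

lemma exists_forall_lt_of_mk_lt_cof {ι : Type*} [LinearOrder ι] {X : Set ι}
    (h : #X < Order.cof ι) : ∃ k, ∀ x ∈ X, x < k := by
  by_contra! H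
  exact h.not_ge (Order.cof_le H)

namespace IsUltra

variable {U : Set B} {a b : B}

lemma top_mem (hU : IsUltra U) : ⊤ ∈ U := hU.1

lemma mem_of_le (hU : IsUltra U) (ha : a ∈ U) (hab : a ≤ b) : b ∈ U := hU.2.2.1 a ha b hab

lemma inf_mem (hU : IsUltra U) (ha : a ∈ U) (hb : b ∈ U) : a ⊓ b ∈ U := hU.2.2.2.1 a ha b hb

lemma compl_mem_iff (hU : IsUltra U) : aᶜ ∈ U ↔ a ∉ U :=
  ⟨fun hc ha => hU.2.1 (inf_compl_eq_bot (a := a) ▸ hU.inf_mem ha hc),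
    (hU.2.2.2.2 a).resolve_left⟩

end IsUltra

lemma injective_of_pairwise_disjoint {ι : Type*} {c : ι → B} (hne : ∀ i, c i ≠ ⊥)
    (hdisj : Pairwise (Disjoint on c)) : Function.Injective c := by
  intro i j h
  by_contra hij
  have hii := hdisj hij
  rw [onFun, h, disjoint_self] at hii
  exact hne j hii

lemma lt_ccOf {ι : Type u} {c : ι → B} (hne : ∀ i, c i ≠ ⊥)
    (hdisj : Pairwise (Disjoint on c)) : #ι < ccOf B := by
  by_contra! hle
  have hcc : ccOf B ∈ {κ | ¬ ∃ A : Set B, IsAntichainIn A ∧ #A = κ} := by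
    refine csInf_mem ⟨Order.succ #B, fun ⟨A, _, hA⟩ => ?_⟩
    exact (Order.lt_succ #B).not_ge (hA ▸ mk_set_le A)
  rw [← mk_range_eq c (injective_of_pairwise_disjoint hne hdisj)] at hle
  obtain ⟨A, hAc, hA⟩ := le_mk_iff_exists_subset.mp hle
  refine hcc ⟨A, ⟨fun x hx => ?_, fun x hx y hy hxy => ?_⟩, hA⟩
  · obtain ⟨i, rfl⟩ := hAc hx
    exact hne i
  · obtain ⟨i, rfl⟩ := hAc hx
    obtain ⟨j, rfl⟩ := hAc hy
    exact disjoint_iff.mp (hdisj fun hij => hxy (congrArg c hij))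

/-- Pushing `U` forward along the partition `c` gives a uniform ultrafilter on `ι`. -/
def IsUniformFamily {ι : Type u} (U : Set B) (c : ι → B) : Prop :=
  ∀ X : Set ι, #X < #ι → (⨆ i ∈ X, c i) ∉ U

variable {U : Set B}

lemma cof_mem_complSpec {ι : Type u} [LinearOrder ι] [WellFoundedLT ι] {a : ι → B}
    (ha : ∀ i, a i ∈ U) (hanti : Antitone a) (hinf : ⨅ i, a i = ⊥) :
    Order.cof ι ∈ complSpec U := by
  obtain ⟨s, hs, htype⟩ := Ordinal.exists_ord_cof_eq ι
  obtain ⟨e⟩ : Nonempty ((Order.cof ι).ord.ToType ≃o s) := by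
    rw [← htype]
    exact ⟨OrderIso.ofRelIsoLT (Ordinal.type_eq.mp (Ordinal.type_toType _)).some⟩
  refine ⟨fun x => a (e x), fun x => ha _, hanti.comp_monotone
    ((Subtype.mono_coe _).comp e.monotone), eq_bot_iff.mpr (hinf ▸ le_iInf fun i => ?_)⟩
  obtain ⟨j, hj, hij⟩ := hs i
  exact iInf_le_of_le (e.symm ⟨j, hj⟩) (by simpa using hanti hij)

lemma complSpec_nonempty_of_iInf_eq_bot (hU : IsUltra U) {ι : Type u} [LinearOrder ι]
    [WellFoundedLT ι] {a : ι → B} (ha : ∀ i, a i ∈ U) (hinf : ⨅ i, a i = ⊥) :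
    (complSpec U).Nonempty := by
  set P : ι → B := fun i => ⨅ j ≤ i, a j
  have hP : Antitone P := fun i i' h => biInf_mono fun j hj => hj.trans h
  by_cases hall : ∀ i, P i ∈ U
  · refine ⟨_, cof_mem_complSpec hall hP (eq_bot_iff.mpr (hinf ▸ le_iInf fun i => ?_))⟩
    exact (iInf_le _ i).trans (iInf₂_le (f := fun j (_ : j ≤ i) => a j) i le_rfl)
  push Not at hall
  obtain ⟨θ, hθ, hmin⟩ := WellFounded.has_min wellFounded_lt {i | P i ∉ U} hall
  set m := ⨅ j < θ, a j
  have hm : m ∉ U := by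
    refine fun hm => hθ (hU.mem_of_le (hU.inf_mem hm (ha θ)) (le_iInf₂ fun j hj => ?_))
    rcases hj.lt_or_eq with h | rfl
    · exact inf_le_left.trans (iInf₂_le j h)
    · exact inf_le_right
  obtain ⟨j₀, hj₀⟩ : ∃ j, j < θ := by
    by_contra! h
    exact hm (by simpa [m, fun j => (h j).not_gt] using hU.top_mem)
  refine ⟨_, cof_mem_complSpec (ι := Set.Iio θ) (a := fun i => P i ⊓ mᶜ)
    (fun i => hU.inf_mem (not_not.mp fun h => hmin i h i.2) (hU.compl_mem_iff.mpr hm))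
    (fun i i' h => inf_le_inf_right _ (hP h)) (eq_bot_iff.mpr ?_)⟩
  calc ⨅ i : Set.Iio θ, P i ⊓ mᶜ ≤ m ⊓ mᶜ := by
        refine le_inf (le_iInf₂ fun j hj => ?_) (iInf_le_of_le ⟨j₀, hj₀⟩ inf_le_right)
        exact iInf_le_of_le ⟨j, hj⟩
          (inf_le_left.trans (iInf₂_le (f := fun k (_ : k ≤ j) => a k) j le_rfl))
    _ = ⊥ := inf_compl_eq_bot

lemma complSpec_nonempty (hU : IsUltra U) (hnp : sInf U = ⊥) : (complSpec U).Nonempty := by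
  obtain ⟨_, _, -⟩ := exists_ord_eq_type_lt U
  exact complSpec_nonempty_of_iInf_eq_bot hU (a := Subtype.val) Subtype.prop
    (by rwa [← sInf_eq_iInf'])

lemma isUniformFamily_wfDisjointed (hU : IsUltra U) {ι : Type u} [LinearOrder ι] {a : ι → B}
    (ha : ∀ i, a i ∈ U) (hanti : Antitone a) (hcof : #ι ≤ Order.cof ι) :
    IsUniformFamily U (wfDisjointed fun i => (a i)ᶜ) := by
  intro X hX hmem
  obtain ⟨k, hk⟩ := exists_forall_lt_of_mk_lt_cof (hX.trans_le hcof)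
  have hle : ⨆ i ∈ X, wfDisjointed (fun i => (a i)ᶜ) i ≤ (a k)ᶜ := iSup₂_le fun i hi =>
    (wfDisjointed_le _ i).trans (compl_le_compl (hanti (hk i hi).le))
  exact hU.compl_mem_iff.mp (hU.mem_of_le hmem hle) (ha k)

lemma exists_ne_bot_reindex {ι : Type u} (htop : ⊤ ∈ U) {d : ι → B}
    (hdisj : Pairwise (Disjoint on d)) (hsup : ⨆ i, d i = ⊤) (hunif : IsUniformFamily U d) :
    ∃ c : ι → B, (∀ i, c i ≠ ⊥) ∧ Pairwise (Disjoint on c) ∧ ⨆ i, c i = ⊤ ∧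
      IsUniformFamily U c := by
  set S := {i | d i ≠ ⊥}
  have hsupS : ⨆ i ∈ S, d i = ⊤ := by
    refine hsup ▸ le_antisymm (iSup₂_le fun i _ => le_iSup d i) (iSup_le fun i => ?_)
    by_cases hi : d i = ⊥
    · exact hi ▸ bot_le
    · exact le_iSup₂ (f := fun i _ => d i) i hi
  have hS : #S = #ι :=
    (mk_set_le S).antisymm (not_lt.mp fun h => hunif S h (hsupS ▸ htop))
  obtain ⟨e⟩ := Cardinal.eq.mp hS.symm
  refine ⟨fun i => d (e i), fun i => (e i).2, hdisj.comp_of_injective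
    (Subtype.val_injective.comp e.injective), ?_, fun X hX hmem => ?_⟩
  · rw [e.iSup_comp (g := fun i : S => d i), iSup_subtype'' S d, hsupS]
  · refine hunif ((fun i => (e i : ι)) '' X) (mk_image_le.trans_lt hX) ?_
    rwa [iSup_image]

theorem statement14 {B : Type u} [CompleteBooleanAlgebra B]
    (U : Set B) (hU : IsUltra U) (hnp : sInf U = ⊥)
    (lam : Cardinal.{u}) (hlam : lam = ccOf B)
    (σ : Cardinal.{u}) (hσ : σ = sInf (complSpec U)) :
    σ < lam ∧
    ∃ c : σ.ord.ToType → B,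
      Function.Injective c ∧ (∀ γ, c γ ≠ ⊥) ∧
      (∀ γ γ', γ ≠ γ' → c γ ⊓ c γ' = ⊥) ∧ (⨆ γ, c γ) = ⊤ ∧
      ∀ X : Set σ.ord.ToType, Cardinal.mk X < σ → (⨆ γ ∈ X, c γ) ∉ U := by
  obtain ⟨a, ha, hanti, hinf⟩ : σ ∈ complSpec U := hσ ▸ csInf_mem (complSpec_nonempty hU hnp)
  have hmk : #σ.ord.ToType = σ := by rw [mk_toType, card_ord]
  have hcof : #σ.ord.ToType ≤ Order.cof σ.ord.ToType :=
    hmk.trans_le (hσ.trans_le (csInf_le' (cof_mem_complSpec ha hanti hinf)))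
  have hsup : ⨆ i, wfDisjointed (fun i => (a i)ᶜ) i = ⊤ := by
    rw [iSup_wfDisjointed, ← compl_iInf, hinf, compl_bot]
  obtain ⟨c, hne, hdisj, hcsup, hunif⟩ := exists_ne_bot_reindex hU.top_mem
    (pairwise_disjoint_wfDisjointed _) hsup (isUniformFamily_wfDisjointed hU ha hanti hcof)
  refine ⟨(hmk.symm.trans_lt (lt_ccOf hne hdisj)).trans_eq hlam.symm, c,
    injective_of_pairwise_disjoint hne hdisj, hne, fun γ γ' h => disjoint_iff.mp (hdisj h),
    hcsup, fun X hX => hunif X (hX.trans_eq hmk.symm)⟩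

end BA
end
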